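/- arXiv:0906.2017 — 5 statements merged into one kernel-verified Lean document; each statement's English description precedes it below -/
import Mathlib

section
/- Let (A, φ, φ') be an infinitesimal noncommutative probability space with free cumulant functionals (κ_n)_{n≥1} and infinitesimal free cumulant functionals (κ'_n)_{n≥1}. Suppose D : A → A is a derivation with the property that φ' = φ ∘ D. Then for every n ≥ 1 and all a_1, ..., a_n ∈ A one has κ'_n(a_1, ..., a_n) = Σ_{m=1}^{n} κ_n(a_1, ..., a_{m-1}, D(a_m), a_{m+1}, ..., a_n). -/
namespace InfFree

open scoped BigOperators

/-- `π` is a partition of `Fin n` into nonempty blocks. -/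
def IsPartition {n : ℕ} (π : Finset (Finset (Fin n))) : Prop :=
  (∀ V ∈ π, V.Nonempty) ∧ ∀ i : Fin n, ∃! V : Finset (Fin n), V ∈ π ∧ i ∈ V

/-- `π` is non-crossing: there are no `p < q < r < s` with `p, r` in one block and
`q, s` in another block. -/
def IsNonCrossing {n : ℕ} (π : Finset (Finset (Fin n))) : Prop :=
  ∀ p q r s : Fin n, p < q → q < r → r < s →
    ∀ V ∈ π, ∀ W ∈ π, p ∈ V → r ∈ V → q ∈ W → s ∈ W → V = W

open Classical in
/-- The finset `NC n` of non-crossing partitions of `Fin n`. -/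
noncomputable def NC (n : ℕ) : Finset (Finset (Finset (Fin n))) :=
  Finset.univ.filter fun π => IsPartition π ∧ IsNonCrossing π

/-- Restriction of an `n`-tuple to a subset `V ⊆ Fin n`, listed in increasing order. -/
def restrict {α : Type*} {n : ℕ} (a : Fin n → α) (V : Finset (Fin n)) :
    Fin V.card → α :=
  fun i => a (V.orderIsoOfFin rfl i).1

/-- `κ` is the family of `R`-valued non-crossing cumulant functionals of `φ`, i.e.
the moment-cumulant formulas hold. -/
def MomentCumulant {A : Type*} [Ring A] {R : Type*} [CommRing R]
    (φ : A → R) (κ : ∀ n : ℕ, (Fin n → A) → R) : Prop :=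
  ∀ (n : ℕ), 1 ≤ n → ∀ a : Fin n → A,
    φ (List.ofFn a).prod = ∑ π ∈ NC n, ∏ V ∈ π, κ V.card (restrict a V)

/-- `κ'` is the family of infinitesimal non-crossing cumulant functionals of
`(φ, φ')`, where `κ` is the family of non-crossing cumulant functionals of `φ`. -/
def InfMomentCumulant {A : Type*} [Ring A]
    (φ' : A → ℂ) (κ κ' : ∀ n : ℕ, (Fin n → A) → ℂ) : Prop :=
  ∀ (n : ℕ), 1 ≤ n → ∀ a : Fin n → A,
    φ' (List.ofFn a).prod =
      ∑ π ∈ NC n, ∑ V ∈ π,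
        κ' V.card (restrict a V) * ∏ W ∈ π.erase V, κ W.card (restrict a W)

/-- Consecutive indices are distinct. -/
def Alternating {n k : ℕ} (i : Fin n → Fin k) : Prop :=
  ∀ (m : ℕ) (h : m + 1 < n), i ⟨m, Nat.lt_of_succ_lt h⟩ ≠ i ⟨m + 1, h⟩

/-- Freeness of the family of subsets `S` with respect to `φ`. -/
def FreeSets {A : Type*} [Ring A] {k : ℕ} (φ : A → ℂ) (S : Fin k → Set A) : Prop :=
  ∀ (n : ℕ), 1 ≤ n → ∀ i : Fin n → Fin k, Alternating i →
    ∀ a : Fin n → A, (∀ m, a m ∈ S (i m)) → (∀ m, φ (a m) = 0) →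
      φ (List.ofFn a).prod = 0

/-- Infinitesimal freeness of the family of subsets `S` with respect to `(φ, φ')`. -/
def InfFreeSets {A : Type*} [Ring A] {k : ℕ} (φ φ' : A → ℂ) (S : Fin k → Set A) : Prop :=
  ∀ (n : ℕ) (hn : 1 ≤ n) (i : Fin n → Fin k), Alternating i →
    ∀ a : Fin n → A, (∀ m, a m ∈ S (i m)) → (∀ m, φ (a m) = 0) →
      φ (List.ofFn a).prod = 0 ∧
      ((Odd n ∧ ∀ m : Fin n, i m = i m.rev) →
        φ' (List.ofFn a).prod =
          (∏ j : Fin ((n - 1) / 2),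
              φ (a ⟨j, by have := j.isLt; omega⟩ *
                 a ⟨n - 1 - j, by have := j.isLt; omega⟩)) *
            φ' (a ⟨n / 2, by omega⟩)) ∧
      (¬(Odd n ∧ ∀ m : Fin n, i m = i m.rev) → φ' (List.ofFn a).prod = 0)

-- helper lemmas to test

lemma update_comp_succ {α : Type*} {n : ℕ} (a : Fin (n+1) → α) (m : Fin n) (x : α) :
    (fun i : Fin n => Function.update a m.succ x i.succ)
      = Function.update (fun i => a i.succ) m x := by
  funext i
  by_cases h : i = m
  · subst h; simp
  · rw [Function.update_of_ne h,
      Function.update_of_ne (fun hc => h (Fin.succ_injective n hc))]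

lemma D_one {A : Type*} [Ring A] [Algebra ℂ A] (D : A →ₗ[ℂ] A)
    (hD : ∀ a b : A, D (a * b) = D a * b + a * D b) : D 1 = 0 := by
  have := hD 1 1
  simp only [one_mul, mul_one] at this
  exact (left_eq_add.mp this)

lemma D_prod {A : Type*} [Ring A] [Algebra ℂ A] (D : A →ₗ[ℂ] A)
    (hD : ∀ a b : A, D (a * b) = D a * b + a * D b) :
    ∀ (n : ℕ) (a : Fin n → A),
      D (List.ofFn a).prod
        = ∑ m : Fin n, (List.ofFn (Function.update a m (D (a m)))).prod := by
  intro n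
  induction n with
  | zero => intro a; simp [D_one D hD]
  | succ n ih =>
    intro a
    rw [List.ofFn_succ, List.prod_cons, hD, ih, Fin.sum_univ_succ]
    congr 1
    · rw [List.ofFn_succ, List.prod_cons, Function.update_self]
      have h0 : (fun i : Fin n => Function.update a 0 (D (a 0)) i.succ)
          = fun i => a i.succ :=
        funext fun i => Function.update_of_ne (Fin.succ_ne_zero i) _ _
      rw [h0]
    · rw [Finset.mul_sum]
      refine Finset.sum_congr rfl fun m _ => ?_
      rw [List.ofFn_succ, List.prod_cons,
        Function.update_of_ne (Fin.succ_ne_zero m).symm,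
        update_comp_succ a m (D (a m.succ))]

lemma restrict_update_notMem {α : Type*} {n : ℕ} (a : Fin n → α) {V : Finset (Fin n)}
    {m : Fin n} (hm : m ∉ V) (x : α) :
    restrict (Function.update a m x) V = restrict a V := by
  funext i
  exact Function.update_of_ne
    (fun h => hm (by rw [← h]; exact (V.orderIsoOfFin rfl i).2)) _ _

lemma restrict_update_mem {α : Type*} {n : ℕ} (a : Fin n → α) {V : Finset (Fin n)}
    {m : Fin n} (hm : m ∈ V) (x : α) :
    restrict (Function.update a m x) V
      = Function.update (restrict a V) ((V.orderIsoOfFin rfl).symm ⟨m, hm⟩) x := by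
  funext i
  by_cases h : i = (V.orderIsoOfFin rfl).symm ⟨m, hm⟩
  · subst h
    rw [Function.update_self]
    show Function.update a m x ((V.orderIsoOfFin rfl) ((V.orderIsoOfFin rfl).symm ⟨m, hm⟩)).1 = x
    rw [OrderIso.apply_symm_apply, Function.update_self]
  · rw [Function.update_of_ne h]
    show Function.update a m x ((V.orderIsoOfFin rfl) i).1 = restrict a V i
    rw [Function.update_of_ne]
    · rfl
    · intro hc
      exact h (by rw [← OrderIso.symm_apply_apply (V.orderIsoOfFin rfl) i]; congr 1; exact Subtype.ext hc)

lemma sum_partition {n : ℕ} {π : Finset (Finset (Fin n))} (hπ : IsPartition π)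
    {M : Type*} [AddCommMonoid M] (f : Fin n → M) :
    ∑ m : Fin n, f m = ∑ V ∈ π, ∑ m ∈ V, f m := by
  have hdisj : (π : Set (Finset (Fin n))).PairwiseDisjoint id := by
    intro V hV W hW hVW
    simp only [id, Function.onFun]
    rw [Finset.disjoint_left]
    intro i hiV hiW
    obtain ⟨U, _, hUuniq⟩ := hπ.2 i
    exact hVW ((hUuniq V ⟨hV, hiV⟩).trans (hUuniq W ⟨hW, hiW⟩).symm)
  have hcover : π.biUnion id = Finset.univ := by
    ext i
    simp only [Finset.mem_biUnion, Finset.mem_univ, iff_true, id]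
    obtain ⟨U, hU, _⟩ := hπ.2 i
    exact ⟨U, hU.1, hU.2⟩
  rw [← hcover, Finset.sum_biUnion hdisj]
  simp only [id_eq]

lemma cast_apply {A : Type*} (κ : ∀ n : ℕ, (Fin n → A) → ℂ) {m n : ℕ} (h : m = n)
    (a : Fin n → A) : κ m (a ∘ Fin.cast h) = κ n a := by
  subst h
  rw [Fin.cast_refl, Function.comp_id]

lemma restrict_univ {α : Type*} {n : ℕ} (a : Fin n → α) :
    restrict a (Finset.univ : Finset (Fin n))
      = a ∘ Fin.cast (Finset.card_fin n) := by
  have h : (Finset.univ : Finset (Fin n)).card = n := Finset.card_fin n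
  have hu := Finset.orderEmbOfFin_unique (s := (Finset.univ : Finset (Fin n))) (rfl)
      (f := fun i => Fin.cast h i) (fun x => Finset.mem_univ _)
      (fun i j hij => by simp only [Fin.lt_def, Fin.coe_cast]; exact hij)
  funext i
  show a ((Finset.univ.orderIsoOfFin rfl i) : Fin n) = a (Fin.cast h i)
  rw [Finset.coe_orderIsoOfFin_apply, ← hu]

lemma univ_mem_NC {n : ℕ} (hn : 1 ≤ n) :
    ({Finset.univ} : Finset (Finset (Fin n))) ∈ NC n := by
  simp only [NC, Finset.mem_filter, Finset.mem_univ, true_and]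
  refine ⟨⟨?_, ?_⟩, ?_⟩
  · intro V hV
    rw [Finset.mem_singleton] at hV
    subst hV
    exact ⟨⟨0, hn⟩, Finset.mem_univ _⟩
  · intro i
    exact ⟨Finset.univ, ⟨Finset.mem_singleton_self _, Finset.mem_univ _⟩,
      fun W hW => Finset.mem_singleton.mp hW.1⟩
  · intro p q r s _ _ _ V hV W hW _ _ _ _
    rw [Finset.mem_singleton] at hV hW
    rw [hV, hW]

lemma block_card_lt {n : ℕ} {π : Finset (Finset (Fin n))}
    (hπ : IsPartition π) (hne : π ≠ {Finset.univ}) : ∀ V ∈ π, V.card < n := by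
  intro V hV
  have hle : V.card ≤ n := by
    simpa using Finset.card_le_card (Finset.subset_univ V)
  rcases lt_or_eq_of_le hle with h | h
  · exact h
  · exfalso
    have hVu : V = Finset.univ := Finset.eq_univ_of_card V (by rw [h, Fintype.card_fin])
    apply hne
    ext W
    simp only [Finset.mem_singleton]
    constructor
    · intro hW
      obtain ⟨i, hi⟩ := hπ.1 W hW
      obtain ⟨U, _, hUuniq⟩ := hπ.2 i
      have h1 := hUuniq W ⟨hW, hi⟩
      have h2 := hUuniq V ⟨hV, by rw [hVu]; exact Finset.mem_univ i⟩
      rw [h1, ← h2, hVu]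
    · intro hW
      rw [hW, ← hVu]
      exact hV

lemma mem_NC {n : ℕ} {π : Finset (Finset (Fin n))} (h : π ∈ NC n) :
    IsPartition π ∧ IsNonCrossing π := by
  simpa [NC] using h

lemma leib_cast {A : Type*} (κ : ∀ n : ℕ, (Fin n → A) → ℂ) (g : A → A) {m n : ℕ}
    (h : m = n) (a : Fin n → A) :
    (∑ j : Fin m, κ m (Function.update (a ∘ Fin.cast h) j (g ((a ∘ Fin.cast h) j))))
      = ∑ j : Fin n, κ n (Function.update a j (g (a j))) := by
  subst h
  rw [Fin.cast_refl, Function.comp_id]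


/-- If `D` is a derivation on `A` with `φ' = φ ∘ D`, then the
infinitesimal cumulants are obtained from the cumulants by the Leibniz rule in `D`. -/
theorem infCumulant_eq_sum_cumulant_derivation
    {A : Type*} [Ring A] [Algebra ℂ A]
    (φ φ' : A →ₗ[ℂ] ℂ) (hφ1 : φ 1 = 1) (hφ'1 : φ' 1 = 0)
    (κ κ' : ∀ n : ℕ, (Fin n → A) → ℂ)
    (hκ : MomentCumulant (⇑φ) κ) (hκ' : InfMomentCumulant (⇑φ') κ κ')
    (D : A →ₗ[ℂ] A) (hD : ∀ a b : A, D (a * b) = D a * b + a * D b)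
    (hφ'D : ∀ a : A, φ' a = φ (D a)) :
    ∀ (n : ℕ), 1 ≤ n → ∀ a : Fin n → A,
      κ' n a = ∑ m : Fin n, κ n (Function.update a m (D (a m))) := by
  have hEx : InfMomentCumulant (⇑φ') κ
      (fun k b => ∑ m : Fin k, κ k (Function.update b m (D (b m)))) := by
    intro n hn a
    rw [hφ'D, D_prod D hD, map_sum,
      Finset.sum_congr rfl fun m (_ : m ∈ Finset.univ) =>
        hκ n hn (Function.update a m (D (a m))),
      Finset.sum_comm]
    refine Finset.sum_congr rfl fun π hπ => ?_
    obtain ⟨hp, _⟩ := mem_NC hπ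
    rw [sum_partition hp]
    refine Finset.sum_congr rfl fun V hV => ?_
    rw [Finset.sum_mul]
    refine Finset.sum_bij'
      (i := fun (m : Fin n) (hm : m ∈ V) => (V.orderIsoOfFin rfl).symm ⟨m, hm⟩)
      (j := fun (j : Fin V.card) _ => ((V.orderIsoOfFin rfl) j : Fin n))
      (fun m hm => Finset.mem_univ _)
      (fun j _ => ((V.orderIsoOfFin rfl) j).2)
      (fun m hm => by simp)
      (fun j _ => (V.orderIsoOfFin rfl).symm_apply_apply j)
      ?_
    intro m hm
    rw [← Finset.mul_prod_erase π
      (fun W => κ W.card (restrict (Function.update a m (D (a m))) W)) hV]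
    have hres : restrict a V ((V.orderIsoOfFin rfl).symm ⟨m, hm⟩) = a m := by
      show a (((V.orderIsoOfFin rfl) ((V.orderIsoOfFin rfl).symm ⟨m, hm⟩)) : Fin n) = a m
      rw [OrderIso.apply_symm_apply]
    congr 1
    · rw [restrict_update_mem a hm, hres]
    · refine Finset.prod_congr rfl fun W hW => ?_
      obtain ⟨hWne, hWπ⟩ := Finset.mem_erase.mp hW
      have hmW : m ∉ W := by
        intro hmW
        obtain ⟨U, _, hUuniq⟩ := hp.2 m
        exact hWne ((hUuniq W ⟨hWπ, hmW⟩).trans (hUuniq V ⟨hV, hm⟩).symm)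
      rw [restrict_update_notMem a hmW]
  intro n
  induction n using Nat.strong_induction_on with
  | _ n ih =>
    intro hn a
    have h3 := (hκ' n hn a).symm.trans (hEx n hn a)
    have huniv := univ_mem_NC hn
    rw [← Finset.add_sum_erase _ _ huniv, ← Finset.add_sum_erase _ _ huniv] at h3
    have hrest :
        ∑ π ∈ (NC n).erase {Finset.univ}, ∑ V ∈ π,
            κ' V.card (restrict a V) * ∏ W ∈ π.erase V, κ W.card (restrict a W)
          = ∑ π ∈ (NC n).erase {Finset.univ}, ∑ V ∈ π,
              (∑ m : Fin V.card,
                κ V.card (Function.update (restrict a V) m (D (restrict a V m))))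
                * ∏ W ∈ π.erase V, κ W.card (restrict a W) := by
      refine Finset.sum_congr rfl fun π hπ => ?_
      obtain ⟨hπne, hπNC⟩ := Finset.mem_erase.mp hπ
      obtain ⟨hp, _⟩ := mem_NC hπNC
      refine Finset.sum_congr rfl fun V hV => ?_
      congr 1
      exact ih V.card (block_card_lt hp hπne V hV)
        (Finset.card_pos.mpr (hp.1 V hV)) (restrict a V)
    rw [hrest] at h3
    have h4 := add_right_cancel h3
    simp only [Finset.sum_singleton, Finset.erase_singleton, Finset.prod_empty,
      mul_one] at h4
    rw [restrict_univ a, cast_apply κ' (Finset.card_fin n) a,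
      leib_cast κ (⇑D) (Finset.card_fin n) a] at h4
    exact h4


end InfFree
end

section
/- Let (A, φ) be a noncommutative probability space, and let A_1, ..., A_k be unital subalgebras of A which are free in (A, φ). Suppose D : A → A is a derivation such that D(A_i) ⊆ A_i for every 1 ≤ i ≤ k. Set φ' := φ ∘ D (which satisfies φ'(1) = 0, so (A, φ, φ') is an incps). Then A_1, ..., A_k are infinitesimally free in (A, φ, φ'). -/
/-!
Let `a₁ ⋯ aₙ` be a centered alternating word. By the Leibniz rule,
`φ'(a₁ ⋯ aₙ) = ∑ₘ φ(a₁ ⋯ D(aₘ) ⋯ aₙ)`. Since `D` preserves each `Aᵢ`, `D(aₘ) = cₘ + φ'(aₘ) 1` with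
`cₘ` centered in the same subalgebra as `aₘ`; the `cₘ`-part is again a centered alternating word,
so it vanishes by freeness, and only `φ'(aₘ) φ(a₁ ⋯ aₘ₋₁ aₘ₊₁ ⋯ aₙ)` survives. For two centered
alternating words, `φ(u_r ⋯ u₁ v₁ ⋯ v_s)` collapses inductively from the middle: it is
`∏ⱼ φ(uⱼ vⱼ)` if the index sequences agree and `0` otherwise. The index sequences on the two
sides of `m` agree exactly when `n` is odd, `m` is the middle position and the index sequence is a
palindrome.
-/

namespace InfFree

open scoped BigOperators

theorem ofFn_reverse {α : Type*} {n : ℕ} (f : Fin n → α) :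
    (List.ofFn f).reverse = List.ofFn (fun m => f m.rev) := by
  refine List.ext_getElem (by simp) fun t _ _ => ?_
  simp only [List.getElem_reverse, List.getElem_ofFn, List.length_ofFn]
  congr 2
  dsimp only
  omega

theorem ofFn_reverse_eq_self_iff {α : Type*} {n : ℕ} (f : Fin n → α) :
    (List.ofFn f).reverse = List.ofFn f ↔ ∀ m, f m = f m.rev := by
  rw [ofFn_reverse, List.ofFn_inj, funext_iff]
  exact forall_congr' fun _ => eq_comm

theorem reverse_take_eq_drop_succ_iff {α : Type*} {l : List α} {m : ℕ} (hm : m < l.length) :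
    (l.take m).reverse = l.drop (m + 1) ↔ l.length = 2 * m + 1 ∧ l.reverse = l := by
  have hsplit : l = l.take m ++ l[m] :: l.drop (m + 1) := by
    rw [List.getElem_cons_drop, List.take_append_drop]
  constructor
  · intro h
    have hlen := congrArg List.length h
    simp only [List.length_reverse, List.length_take, List.length_drop] at hlen
    refine ⟨by omega, ?_⟩
    calc l.reverse = (l.take m ++ l[m] :: (l.take m).reverse).reverse := by rw [h, ← hsplit]
      _ = l.take m ++ l[m] :: (l.take m).reverse := by
        simp only [List.reverse_append, List.reverse_cons, List.reverse_reverse,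
          List.append_assoc, List.singleton_append]
      _ = l := by rw [h, ← hsplit]
  · rintro ⟨hlen, hpal⟩
    conv_rhs => rw [← hpal]
    rw [List.drop_reverse]
    congr 2
    omega

theorem prod_zipWith_reverse_take_drop_ofFn {α M : Type*} [CommMonoid M] (f : α → α → M)
    {n m : ℕ} (hn : n = 2 * m + 1) (a : Fin n → α) :
    (List.zipWith f ((List.ofFn a).take m).reverse ((List.ofFn a).drop (m + 1))).prod =
      ∏ j : Fin m, f (a ⟨j, by omega⟩) (a ⟨n - 1 - j, by omega⟩) := by
  have hlist : List.zipWith f ((List.ofFn a).take m).reverse ((List.ofFn a).drop (m + 1)) =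
      List.ofFn fun j : Fin m => f (a ⟨j.rev, by omega⟩) (a ⟨n - 1 - j.rev, by omega⟩) := by
    refine List.ext_getElem (by simp; omega) fun t h _ => ?_
    simp only [List.length_zipWith, List.length_reverse, List.length_take, List.length_drop,
      List.length_ofFn] at h
    simp only [List.getElem_zipWith, List.getElem_reverse, List.getElem_take, List.getElem_drop,
      List.getElem_ofFn, List.length_take, List.length_ofFn, Fin.val_rev]
    congr 2 <;> ext <;> simp <;> omega
  rw [hlist, List.prod_ofFn]
  exact Equiv.prod_comp Fin.revPerm fun j : Fin m =>
    f (a ⟨j, by omega⟩) (a ⟨n - 1 - j, by omega⟩)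

theorem reverse_take_ofFn_eq_drop_iff {α : Type*} {n m : ℕ} (hm : m < n) (f : Fin n → α) :
    ((List.ofFn f).take m).reverse = (List.ofFn f).drop (m + 1) ↔
      n = 2 * m + 1 ∧ ∀ j, f j = f j.rev := by
  rw [reverse_take_eq_drop_succ_iff (by simpa), List.length_ofFn, ofFn_reverse_eq_self_iff]

theorem apply_prod_map_of_leibniz {A ι : Type*} [Ring A] (D : A → A)
    (hD : ∀ a b, D (a * b) = D a * b + a * D b) (f : ι → A) (l : List ι) :
    D (l.map f).prod = ∑ m : Fin l.length,
      ((l.take m).map f).prod * D (f l[(m : ℕ)]) * ((l.drop (m + 1)).map f).prod := by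
  induction l with
  | nil =>
    have h : D 1 = D 1 + D 1 := by simpa using hD 1 1
    simpa using h
  | cons x l ih =>
    rw [List.map_cons, List.prod_cons, hD, ih, Finset.mul_sum]
    simp only [List.length_cons, Fin.sum_univ_succ]
    simp [mul_assoc]

section Words

variable {A : Type*} [Ring A] [Algebra ℂ A] {k : ℕ}
  (φ : A →ₗ[ℂ] ℂ) (Alg : Fin k → Subalgebra ℂ A)

theorem exists_centered_add_smul_one (hφ1 : φ 1 = 1) {S : Subalgebra ℂ A} {a : A}
    (ha : a ∈ S) :
    ∃ c ∈ S, φ c = 0 ∧ a = c + φ a • 1 :=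
  ⟨a - φ a • 1, S.sub_mem ha (S.smul_mem S.one_mem _), by simp [hφ1], by simp⟩

/-- A word is a list of letters `p.1`, each tagged with the index `p.2` of the subalgebra it is
drawn from. -/
def IsCenteredAlternating (w : List (A × Fin k)) : Prop :=
  (∀ p ∈ w, p.1 ∈ Alg p.2 ∧ φ p.1 = 0) ∧ (w.map Prod.snd).IsChain (· ≠ ·)

namespace IsCenteredAlternating

variable {φ Alg}

theorem reverse {w : List (A × Fin k)} (hw : IsCenteredAlternating φ Alg w) :
    IsCenteredAlternating φ Alg w.reverse :=
  ⟨fun p hp => hw.1 p (List.mem_reverse.mp hp), by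
    rw [List.map_reverse, List.isChain_reverse]; exact hw.2.imp fun _ _ h => h.symm⟩

theorem append {u v : List (A × Fin k)} (hu : IsCenteredAlternating φ Alg u)
    (hv : IsCenteredAlternating φ Alg v)
    (huv : ∀ x ∈ u.getLast?, ∀ y ∈ v.head?, x.2 ≠ y.2) :
    IsCenteredAlternating φ Alg (u ++ v) := by
  refine ⟨fun p hp => (List.mem_append.mp hp).elim (hu.1 p) (hv.1 p), ?_⟩
  rw [List.map_append, List.isChain_append]
  refine ⟨hu.2, hv.2, ?_⟩
  simp only [List.getLast?_map, List.head?_map, Option.mem_map]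
  rintro _ ⟨x, hx, rfl⟩ _ ⟨y, hy, rfl⟩
  exact huv x hx y hy

theorem take {w : List (A × Fin k)} (hw : IsCenteredAlternating φ Alg w) (m : ℕ) :
    IsCenteredAlternating φ Alg (w.take m) :=
  ⟨fun p hp => hw.1 p (List.mem_of_mem_take hp), by rw [List.map_take]; exact hw.2.take m⟩

theorem drop {w : List (A × Fin k)} (hw : IsCenteredAlternating φ Alg w) (m : ℕ) :
    IsCenteredAlternating φ Alg (w.drop m) :=
  ⟨fun p hp => hw.1 p (List.mem_of_mem_drop hp), by rw [List.map_drop]; exact hw.2.drop m⟩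

theorem tail {x : A × Fin k} {w : List (A × Fin k)}
    (hw : IsCenteredAlternating φ Alg (x :: w)) : IsCenteredAlternating φ Alg w :=
  hw.drop 1

theorem set {w : List (A × Fin k)} (hw : IsCenteredAlternating φ Alg w) {m : ℕ}
    (hm : m < w.length) {c : A} (hc : c ∈ Alg w[m].2) (hc0 : φ c = 0) :
    IsCenteredAlternating φ Alg (w.set m (c, w[m].2)) := by
  refine ⟨fun p hp => ?_, ?_⟩
  · rcases List.mem_or_eq_of_mem_set hp with hp | rfl
    exacts [hw.1 p hp, ⟨hc, hc0⟩]
  · rw [List.map_set]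
    convert hw.2 using 1
    have h := List.set_getElem_self (as := w.map Prod.snd) (by simpa using hm)
    rwa [List.getElem_map] at h

theorem snd_ne_of_mem_head? {x : A × Fin k} {w : List (A × Fin k)}
    (hw : IsCenteredAlternating φ Alg (x :: w)) : ∀ y ∈ w.head?, x.2 ≠ y.2 := fun y hy =>
  (List.isChain_cons.mp hw.2).1 y.2 (by rw [List.head?_map]; exact Option.mem_map_of_mem _ hy)

theorem map_prod_eq_zero (hfree : FreeSets φ fun i => (Alg i : Set A))
    {w : List (A × Fin k)} (hw : IsCenteredAlternating φ Alg w) (hne : w ≠ []) :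
    φ (w.map Prod.fst).prod = 0 := by
  have hofFn : List.ofFn (fun m : Fin w.length => w[m].1) = w.map Prod.fst :=
    List.ext_getElem (by simp) fun _ _ _ => by simp
  rw [← hofFn]
  refine hfree w.length (List.length_pos_iff.mpr hne) (fun m => w[m].2) ?_ _
    (fun m => (hw.1 _ (List.getElem_mem _)).1) (fun m => (hw.1 _ (List.getElem_mem _)).2)
  intro m hm
  exact List.isChain_iff_getElem.mp ((List.isChain_map _).mp hw.2) m hm

end IsCenteredAlternating

def wordPairing (u v : List (A × Fin k)) : ℂ :=
  if u.map Prod.snd = v.map Prod.snd then (List.zipWith (fun x y => φ (x.1 * y.1)) u v).prod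
  else 0

theorem map_prod_reverse_mul_prod (hφ1 : φ 1 = 1) (hfree : FreeSets φ fun i => (Alg i : Set A))
    {u v : List (A × Fin k)} (hu : IsCenteredAlternating φ Alg u)
    (hv : IsCenteredAlternating φ Alg v) :
    φ ((u.reverse.map Prod.fst).prod * (v.map Prod.fst).prod) = wordPairing φ u v := by
  unfold wordPairing
  induction u generalizing v with
  | nil =>
    cases v with
    | nil => simp [hφ1]
    | cons y v => simpa using hv.map_prod_eq_zero hfree (List.cons_ne_nil y v)
  | cons x u ih =>
    cases v with
    | nil => simpa using hu.reverse.map_prod_eq_zero hfree (by simp)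
    | cons y v =>
      by_cases hxy : x.2 = y.2
      · set P := (u.reverse.map Prod.fst).prod
        set Q := (v.map Prod.fst).prod
        obtain ⟨c, hc, hc0, hxy_eq⟩ := exists_centered_add_smul_one φ hφ1
          (Subalgebra.mul_mem _ (hxy ▸ (hu.1 x (by simp)).1) (hv.1 y (by simp)).1)
        have hPcQ : φ (P * c * Q) = 0 := by
          have hword : IsCenteredAlternating φ Alg (u.reverse ++ (c, y.2) :: v) :=
            hu.tail.reverse.append (hv.set (m := 0) (by simp) hc hc0)
              (by
                rintro a ha _ ⟨⟩
                rw [List.getLast?_reverse] at ha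
                exact fun h => hu.snd_ne_of_mem_head? a ha (hxy.trans h.symm))
          simpa [P, Q, mul_assoc] using hword.map_prod_eq_zero hfree (by simp)
        calc φ (((x :: u).reverse.map Prod.fst).prod * ((y :: v).map Prod.fst).prod)
            = φ (P * (x.1 * y.1) * Q) := by simp [P, Q, mul_assoc]
          _ = φ (P * c * Q) + φ (x.1 * y.1) * φ (P * Q) := by
            conv_lhs => rw [hxy_eq]
            simp [mul_add, add_mul]
          _ = _ := by
            rw [hPcQ, zero_add, ih hu.tail hv.tail]
            simp [hxy]
      · have hword := hu.reverse.append hv (by simpa using hxy)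
        simpa [hxy, mul_assoc] using hword.map_prod_eq_zero hfree (by simp)

theorem map_apply_prod_eq_sum (hφ1 : φ 1 = 1) (hfree : FreeSets φ fun i => (Alg i : Set A))
    (D : A → A) (hD : ∀ a b : A, D (a * b) = D a * b + a * D b)
    (hDinv : ∀ i : Fin k, ∀ a ∈ Alg i, D a ∈ Alg i)
    {w : List (A × Fin k)} (hw : IsCenteredAlternating φ Alg w) :
    φ (D (w.map Prod.fst).prod) = ∑ m : Fin w.length, φ (D w[(m : ℕ)].1) *
      wordPairing φ (w.take m).reverse (w.drop (m + 1)) := by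
  rw [apply_prod_map_of_leibniz D hD, map_sum]
  refine Finset.sum_congr rfl fun m _ => ?_
  set P := ((w.take m).map Prod.fst).prod
  set Q := ((w.drop (m + 1)).map Prod.fst).prod
  obtain ⟨c, hc, hc0, hDc⟩ :=
    exists_centered_add_smul_one φ hφ1 (hDinv _ _ (hw.1 _ (List.getElem_mem m.isLt)).1)
  have hPcQ : φ (P * c * Q) = 0 := by
    have := (hw.set m.isLt hc hc0).map_prod_eq_zero hfree
      (by simp [List.ne_nil_of_length_pos (Fin.pos m)])
    simpa [P, Q, List.map_set, List.prod_set, List.map_take, List.map_drop] using this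
  calc φ (P * D w[(m : ℕ)].1 * Q) = φ (P * c * Q) + φ (D w[(m : ℕ)].1) * φ (P * Q) := by
        conv_lhs => rw [hDc]
        simp [mul_add, add_mul]
    _ = _ := by
      rw [hPcQ, zero_add, ← map_prod_reverse_mul_prod φ Alg hφ1 hfree (hw.take m).reverse
        (hw.drop (m + 1)), List.reverse_reverse]

theorem isCenteredAlternating_ofFn {n : ℕ} {i : Fin n → Fin k} (halt : Alternating i)
    {a : Fin n → A} (hmem : ∀ m, a m ∈ Alg (i m)) (hcent : ∀ m, φ (a m) = 0) :
    IsCenteredAlternating φ Alg (List.ofFn fun m => (a m, i m)) := by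
  refine ⟨?_, ?_⟩
  · simp only [List.mem_ofFn, forall_exists_index]
    rintro _ m rfl
    exact ⟨hmem m, hcent m⟩
  · rw [List.map_ofFn]
    exact List.isChain_ofFn.mpr halt

theorem map_apply_prod_ofFn_eq_sum (hφ1 : φ 1 = 1) (hfree : FreeSets φ fun i => (Alg i : Set A))
    (D : A → A) (hD : ∀ a b : A, D (a * b) = D a * b + a * D b)
    (hDinv : ∀ i : Fin k, ∀ a ∈ Alg i, D a ∈ Alg i)
    {n : ℕ} {i : Fin n → Fin k} (halt : Alternating i)
    {a : Fin n → A} (hmem : ∀ m, a m ∈ Alg (i m)) (hcent : ∀ m, φ (a m) = 0) :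
    φ (D (List.ofFn a).prod) = ∑ m : Fin n,
      if n = 2 * m + 1 ∧ ∀ j, i j = i j.rev then
        φ (D (a m)) * ∏ j : Fin m, φ (a ⟨j, by omega⟩ * a ⟨n - 1 - j, by omega⟩)
      else 0 := by
  set w := List.ofFn fun m => (a m, i m)
  have hlen : w.length = n := List.length_ofFn
  have hsnd : w.map Prod.snd = List.ofFn i := by rw [List.map_ofFn]; rfl
  rw [← show w.map Prod.fst = List.ofFn a by rw [List.map_ofFn]; rfl,
    map_apply_prod_eq_sum φ Alg hφ1 hfree D hD hDinv
      (isCenteredAlternating_ofFn φ Alg halt hmem hcent)]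
  refine Fintype.sum_equiv (finCongr hlen) _ _ fun m => ?_
  have hcond : (w.take m).reverse.map Prod.snd = (w.drop (m + 1)).map Prod.snd ↔
      n = 2 * m + 1 ∧ ∀ j, i j = i j.rev := by
    rw [List.map_reverse, List.map_take, List.map_drop, hsnd]
    exact reverse_take_ofFn_eq_drop_iff (m.isLt.trans_eq hlen) i
  rw [wordPairing]
  split_ifs with h h' h'
  · congr 1
    · simp [w]
      rfl
    · exact prod_zipWith_reverse_take_drop_ofFn (m := m) _ h'.1 _
  · exact absurd (hcond.1 h) h'
  · exact absurd (hcond.2 h') h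
  · exact mul_zero _

end Words

/-- If `A_1, …, A_k` are free in `(A, φ)` and `D` is a derivation
leaving each `A_i` invariant, then `A_1, …, A_k` are infinitesimally free in
`(A, φ, φ ∘ D)`. -/
theorem infinitesimallyFree_of_derivation_invariant
    {A : Type*} [Ring A] [Algebra ℂ A]
    (φ : A →ₗ[ℂ] ℂ) (hφ1 : φ 1 = 1)
    {k : ℕ} (Alg : Fin k → Subalgebra ℂ A)
    (hfree : FreeSets (⇑φ) (fun i => (Alg i : Set A)))
    (D : A →ₗ[ℂ] A) (hD : ∀ a b : A, D (a * b) = D a * b + a * D b)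
    (hDinv : ∀ i : Fin k, ∀ a ∈ Alg i, D a ∈ Alg i) :
    InfFreeSets (⇑φ) (fun a => φ (D a)) (fun i => (Alg i : Set A)) := by
  intro n hn i halt a hmem hcent
  have hsum := map_apply_prod_ofFn_eq_sum φ Alg hφ1 hfree D hD hDinv halt hmem hcent
  refine ⟨hfree n hn i halt a hmem hcent, fun ⟨hodd, hsym⟩ => ?_, fun hnot => ?_⟩
  · have hn_odd : n = 2 * ((n - 1) / 2) + 1 := by obtain ⟨r, rfl⟩ := hodd; omega
    beta_reduce
    rw [hsum, Finset.sum_eq_single ⟨(n - 1) / 2, by omega⟩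
      (fun m _ hm => if_neg fun h => hm (Fin.ext (by simp only; omega))) (by simp),
      if_pos ⟨hn_odd, hsym⟩, mul_comm]
    congr 4
    rw [Fin.mk.injEq]
    omega
  · beta_reduce
    rw [hsum]
    exact Finset.sum_eq_zero fun m _ => if_neg fun h => hnot ⟨⟨m, h.1⟩, h.2⟩

end InfFree
end

section
/- Let A be a unital ℂ-algebra and let φ̃ : A → G be a ℂ-linear map with φ̃(1) = 1, with G-valued cumulant functionals (κ̃_n)_{n≥1}. Let x_1, ..., x_s ∈ A, let 1 ≤ s_1 < s_2 < ⋯ < s_n = s, and set a_1 = x_1 ⋯ x_{s_1}, a_2 = x_{s_1+1} ⋯ x_{s_2}, ..., a_n = x_{s_{n−1}+1} ⋯ x_{s_n}. Let θ ∈ NC(s) be the interval partition with blocks {1, ..., s_1}, {s_1+1, ..., s_2}, ..., {s_{n−1}+1, ..., s_n}. Then κ̃_n(a_1, ..., a_n) = Σ κ̃_π(x_1, ..., x_s), where the sum is over all π ∈ NC(s) such that the only non-crossing partition of {1, ..., s} which is ≥ π and ≥ θ in reverse refinement order is the one-block partition 1_s. -/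
/-!
The statement is proved in a more general form, by strong induction on the number of points:
the points form a subset `S ⊆ Fin s`, the products `a_j` are taken over the fibres of a monotone
map `g` from `S` onto `T ⊆ Fin n`, and `π ∨ θ = 1` becomes "the images under `g` of the blocks
of `π` link all of `T`". Expanding `φ(a_1 ⋯ a_n) = φ(x_1 ⋯ x_s)` by the moment-cumulant formula
once in the `a`'s and once in the `x`'s, and grouping the partitions `π` of `S` by the partition
`σ` of `T` their images generate, the group of each `σ ≠ 1_T` factorizes over the blocks `B` of
`σ` into problems on the smaller sets `g⁻¹(B)`, so by induction it equals `κ_σ(a)`; cancelling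
these terms leaves the `σ = 1_T` term, which is the claim. That `σ` is again non-crossing comes
down to the fact that two sets sharing a point, neither of which crosses a set `C` avoiding that
point, have a union that does not cross `C` either.
-/

namespace InfFree

open scoped BigOperators

/-- Reverse-refinement order on partitions: every block of `π` is contained in
some block of `ρ`. -/
def leP {n : ℕ} (π ρ : Finset (Finset (Fin n))) : Prop :=
  ∀ V ∈ π, ∃ W ∈ ρ, V ⊆ W

open Classical in
/-- The `j`-th interval block `{s_{j-1}+1, …, s_j}` (in 0-indexed form:
`[s_{j-1}, s_j)`) determined by the boundary data `sfun`. -/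
noncomputable def intervalBlock {n s : ℕ} (sfun : Fin n → ℕ) (j : Fin n) :
    Finset (Fin s) :=
  Finset.univ.filter fun m =>
    (if (j : ℕ) = 0 then 0 else sfun ⟨(j : ℕ) - 1, by have := j.isLt; omega⟩) ≤ (m : ℕ)
      ∧ (m : ℕ) < sfun j

/-- The interval partition `θ` with blocks `{1,…,s_1}, {s_1+1,…,s_2}, …`. -/
noncomputable def intervalPartition {n : ℕ} (sfun : Fin n → ℕ) (s : ℕ) :
    Finset (Finset (Fin s)) :=
  Finset.image (intervalBlock (s := s) sfun) Finset.univ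

section Crossing

variable {α : Type*} [LinearOrder α]

def Interleaved (X Y : Set α) : Prop :=
  ∃ p ∈ X, ∃ q ∈ Y, ∃ r ∈ X, ∃ u ∈ Y, p < q ∧ q < r ∧ r < u

def Crossing (X Y : Set α) : Prop := Interleaved X Y ∨ Interleaved Y X

theorem Crossing.symm {X Y : Set α} (h : Crossing X Y) : Crossing Y X := Or.symm h

theorem Crossing.mono {X X' Y Y' : Set α} (hX : X ⊆ X') (hY : Y ⊆ Y') (h : Crossing X Y) :
    Crossing X' Y' := by
  rcases h with ⟨p, hp, q, hq, r, hr, u, hu, h⟩ | ⟨p, hp, q, hq, r, hr, u, hu, h⟩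
  · exact .inl ⟨p, hX hp, q, hY hq, r, hX hr, u, hY hu, h⟩
  · exact .inr ⟨p, hY hp, q, hX hq, r, hY hr, u, hX hu, h⟩

theorem not_crossing_singleton (e : α) (X : Set α) : ¬ Crossing {e} X := by
  rintro (⟨p, rfl, q, -, r, hr, u, -, hpq, hqr, -⟩ | ⟨p, -, q, rfl, r, -, u, hu, -, hqr, hru⟩)
  · exact lt_asymm hpq (Set.mem_singleton_iff.1 hr ▸ hqr)
  · exact lt_asymm hqr (Set.mem_singleton_iff.1 hu ▸ hru)

theorem Crossing.of_image {β : Type*} [LinearOrder β] {g : α → β} (hg : Monotone g)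
    {X Y : Set α} (h : Crossing (g '' X) (g '' Y)) : Crossing X Y := by
  rcases h with ⟨_, ⟨p, hp, rfl⟩, _, ⟨q, hq, rfl⟩, _, ⟨r, hr, rfl⟩, _, ⟨u, hu, rfl⟩, h⟩ |
    ⟨_, ⟨p, hp, rfl⟩, _, ⟨q, hq, rfl⟩, _, ⟨r, hr, rfl⟩, _, ⟨u, hu, rfl⟩, h⟩
  · exact .inl ⟨p, hp, q, hq, r, hr, u, hu, hg.reflect_lt h.1, hg.reflect_lt h.2.1,
      hg.reflect_lt h.2.2⟩
  · exact .inr ⟨p, hp, q, hq, r, hr, u, hu, hg.reflect_lt h.1, hg.reflect_lt h.2.1,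
      hg.reflect_lt h.2.2⟩

theorem Crossing.image {β : Type*} [LinearOrder β] {g : α → β} (hg : Monotone g)
    {X Y : Set α} (hXY : Disjoint (g '' X) (g '' Y)) (h : Crossing X Y) :
    Crossing (g '' X) (g '' Y) := by
  have hne : ∀ x ∈ X, ∀ y ∈ Y, g x ≠ g y := fun x hx y hy hxy =>
    Set.disjoint_left.1 hXY ⟨x, hx, rfl⟩ ⟨y, hy, hxy.symm⟩
  rcases h with ⟨p, hp, q, hq, r, hr, u, hu, h⟩ | ⟨p, hp, q, hq, r, hr, u, hu, h⟩
  · exact .inl ⟨g p, ⟨p, hp, rfl⟩, g q, ⟨q, hq, rfl⟩, g r, ⟨r, hr, rfl⟩, g u, ⟨u, hu, rfl⟩,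
      (hg h.1.le).lt_of_ne (hne p hp q hq), (hg h.2.1.le).lt_of_ne (hne r hr q hq).symm,
      (hg h.2.2.le).lt_of_ne (hne r hr u hu)⟩
  · exact .inr ⟨g p, ⟨p, hp, rfl⟩, g q, ⟨q, hq, rfl⟩, g r, ⟨r, hr, rfl⟩, g u, ⟨u, hu, rfl⟩,
      (hg h.1.le).lt_of_ne (hne q hq p hp).symm, (hg h.2.1.le).lt_of_ne (hne q hq r hr),
      (hg h.2.2.le).lt_of_ne (hne u hu r hr).symm⟩

theorem StrictMono.crossing_image_iff {β : Type*} [LinearOrder β] {e : α → β} (he : StrictMono e)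
    {X Y : Set α} :
    Crossing (e '' X) (e '' Y) ↔ Crossing X Y := by
  refine ⟨Crossing.of_image he.monotone, ?_⟩
  rintro (⟨p, hp, q, hq, r, hr, u, hu, h⟩ | ⟨p, hp, q, hq, r, hr, u, hu, h⟩)
  · exact .inl ⟨e p, ⟨p, hp, rfl⟩, e q, ⟨q, hq, rfl⟩, e r, ⟨r, hr, rfl⟩, e u, ⟨u, hu, rfl⟩,
      he h.1, he h.2.1, he h.2.2⟩
  · exact .inr ⟨e p, ⟨p, hp, rfl⟩, e q, ⟨q, hq, rfl⟩, e r, ⟨r, hr, rfl⟩, e u, ⟨u, hu, rfl⟩,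
      he h.1, he h.2.1, he h.2.2⟩

/-- A crossing of `A ∪ B` with `C` that uses points of both `A` and `B` can be rerouted through
the common point `e`. -/
theorem not_crossing_union {A B C : Set α} {e : α} (heA : e ∈ A) (heB : e ∈ B) (heC : e ∉ C)
    (hAC : ¬ Crossing A C) (hBC : ¬ Crossing B C) : ¬ Crossing (A ∪ B) C := by
  have mixed : ∀ {A B : Set α}, e ∈ A → e ∈ B → ¬ Crossing A C → ¬ Crossing B C →
      ∀ {p q r u : α}, p < q → q < r → r < u →
        (p ∈ A → q ∈ C → r ∈ B → u ∈ C → False) ∧ (p ∈ C → q ∈ A → r ∈ C → u ∈ B → False) := by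
    intro A B heA heB hAC hBC p q r u h1 h2 h3
    constructor
    · intro hp hq hr hu
      rcases lt_trichotomy e q with he | rfl | he
      · exact hBC (.inl ⟨e, heB, q, hq, r, hr, u, hu, he, h2, h3⟩)
      · exact heC hq
      rcases lt_trichotomy e u with he' | rfl | he'
      · exact hAC (.inl ⟨p, hp, q, hq, e, heA, u, hu, h1, he, he'⟩)
      · exact heC hu
      · exact hBC (.inr ⟨q, hq, r, hr, u, hu, e, heB, h2, h3, he'⟩)
    · intro hp hq hr hu
      rcases lt_trichotomy e p with he | rfl | he
      · exact hAC (.inl ⟨e, heA, p, hp, q, hq, r, hr, he, h1, h2⟩)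
      · exact heC hp
      rcases lt_trichotomy e r with he' | rfl | he'
      · exact hBC (.inr ⟨p, hp, e, heB, r, hr, u, hu, he, he', h3⟩)
      · exact heC hr
      · exact hAC (.inr ⟨p, hp, q, hq, r, hr, e, heA, h1, h2, he'⟩)
  rintro (⟨p, hp, q, hq, r, hr, u, hu, h1, h2, h3⟩ | ⟨p, hp, q, hq, r, hr, u, hu, h1, h2, h3⟩)
  · rcases hp with hp | hp <;> rcases hr with hr | hr
    · exact hAC (.inl ⟨p, hp, q, hq, r, hr, u, hu, h1, h2, h3⟩)
    · exact (mixed heA heB hAC hBC h1 h2 h3).1 hp hq hr hu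
    · exact (mixed heB heA hBC hAC h1 h2 h3).1 hp hq hr hu
    · exact hBC (.inl ⟨p, hp, q, hq, r, hr, u, hu, h1, h2, h3⟩)
  · rcases hq with hq | hq <;> rcases hu with hu | hu
    · exact hAC (.inr ⟨p, hp, q, hq, r, hr, u, hu, h1, h2, h3⟩)
    · exact (mixed heA heB hAC hBC h1 h2 h3).2 hp hq hr hu
    · exact (mixed heB heA hBC hAC h1 h2 h3).2 hp hq hr hu
    · exact hBC (.inr ⟨p, hp, q, hq, r, hr, u, hu, h1, h2, h3⟩)

end Crossing

section Linked

variable {α : Type*}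

def Linked (G : Finset (Finset α)) : α → α → Prop :=
  Relation.ReflTransGen fun i j => ∃ X ∈ G, i ∈ X ∧ j ∈ X

variable {G : Finset (Finset α)} {i j k : α}

theorem Linked.refl (i : α) : Linked G i i := Relation.ReflTransGen.refl

theorem Linked.trans (hij : Linked G i j) (hjk : Linked G j k) : Linked G i k :=
  Relation.ReflTransGen.trans hij hjk

theorem Linked.of_mem {X : Finset α} (hX : X ∈ G) (hi : i ∈ X) (hj : j ∈ X) : Linked G i j :=
  Relation.ReflTransGen.single ⟨X, hX, hi, hj⟩

theorem Linked.symm (h : Linked G i j) : Linked G j i := by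
  induction h with
  | refl => exact .refl i
  | tail _ hjk ih =>
    obtain ⟨X, hX, hj, hk⟩ := hjk
    exact (Linked.of_mem hX hk hj).trans ih

theorem Linked.mono {G' : Finset (Finset α)} (hG : G ⊆ G') (h : Linked G i j) : Linked G' i j :=
  Relation.ReflTransGen.mono (fun _ _ ⟨X, hX, hi, hj⟩ => ⟨X, hG hX, hi, hj⟩) _ _ h

variable [LinearOrder α]

/-- The chain from `u` to `v` is swept into one set, which stays away from `Z` and does not
cross it because each member of `G` it uses does not. -/
theorem exists_linked_set_not_crossing {Z : Set α} {u : α} (hZ : ∀ z ∈ Z, ¬ Linked G u z)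
    (hG : ∀ X ∈ G, (∃ x ∈ X, Linked G u x) → ¬ Crossing (↑X) Z) {v : α} (huv : Linked G u v) :
    ∃ K : Set α, u ∈ K ∧ v ∈ K ∧ (∀ k ∈ K, Linked G u k) ∧ ¬ Crossing K Z := by
  induction huv with
  | refl =>
    refine ⟨{u}, rfl, rfl, fun k hk => ?_, not_crossing_singleton u Z⟩
    rw [Set.mem_singleton_iff.1 hk]
    exact .refl u
  | @tail w v huw hwv ih =>
    obtain ⟨K, huK, hwK, hK, hKZ⟩ := ih
    obtain ⟨X, hX, hwX, hvX⟩ := hwv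
    have hXu : ∀ x ∈ X, Linked G u x := fun x hx => huw.trans (Linked.of_mem hX hwX hx)
    refine ⟨K ∪ X, .inl huK, .inr hvX, fun k hk => hk.elim (hK k) (hXu k), ?_⟩
    exact not_crossing_union hwK hwX (fun hwZ => hZ w hwZ huw) hKZ
      (hG X hX ⟨w, hwX, huw⟩)

theorem not_crossing_linked_class {Z : Set α} {u : α} (hZ : ∀ z ∈ Z, ¬ Linked G u z)
    (hG : ∀ X ∈ G, (∃ x ∈ X, Linked G u x) → ¬ Crossing (↑X) Z) :
    ¬ Crossing {k | Linked G u k} Z := by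
  have key : ∀ c ∈ {k | Linked G u k}, ∀ c' ∈ {k | Linked G u k}, ¬ Crossing {c, c'} Z := by
    intro c hc c' hc'
    obtain ⟨K, hcK, hc'K, -, hKZ⟩ := exists_linked_set_not_crossing (G := G) (u := c)
      (fun z hz hcz => hZ z hz (hc.trans hcz))
      (fun X hX ⟨x, hx, hcx⟩ => hG X hX ⟨x, hx, hc.trans hcx⟩)
      ((Linked.symm hc).trans hc')
    exact fun h => hKZ (h.mono (by simp [Set.insert_subset_iff, hcK, hc'K]) le_rfl)
  rintro (⟨p, hp, q, hq, r, hr, s, hs, h⟩ | ⟨p, hp, q, hq, r, hr, s, hs, h⟩)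
  · exact key p hp r hr (.inl ⟨p, .inl rfl, q, hq, r, .inr rfl, s, hs, h⟩)
  · exact key q hq s hs (.inr ⟨p, hp, q, .inl rfl, r, hr, s, .inr rfl, h⟩)

theorem linked_of_interleaved
    (hG : ∀ X ∈ G, ∀ Y ∈ G, Disjoint X Y → ¬ Crossing (↑X : Set α) ↑Y) {p q r s : α}
    (hpq : p < q) (hqr : q < r) (hrs : r < s) (hpr : Linked G p r) (hqs : Linked G q s) :
    Linked G p q := by
  by_contra hnpq
  refine not_crossing_linked_class (u := q) (Z := {k | Linked G p k})
    (fun z hpz hqz => hnpq (hpz.trans hqz.symm)) (fun X hX ⟨x, hx, hqx⟩ hXZ => ?_)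
    (.inr ⟨p, .refl p, q, .refl q, r, hpr, s, hqs, hpq, hqr, hrs⟩)
  have hXp : ∀ z ∈ X, ¬ Linked G p z := fun z hz hpz =>
    hnpq (hpz.trans ((Linked.of_mem hX hx hz).symm.trans hqx.symm))
  refine not_crossing_linked_class (u := p) (Z := X) hXp
    (fun Y hY ⟨y, hy, hpy⟩ => hG Y hY X hX (Finset.disjoint_left.2 fun z hzY hzX =>
      hXp z hzX (hpy.trans (Linked.of_mem hY hy hzY)))) hXZ.symm

end Linked

section Partition

open Finset

variable {α : Type*} {S T : Finset α} {π σ : Finset (Finset α)}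

structure IsPartitionOf (S : Finset α) (π : Finset (Finset α)) : Prop where
  nonempty : ∀ V ∈ π, V.Nonempty
  subset : ∀ V ∈ π, V ⊆ S
  exists_mem : ∀ i ∈ S, ∃ V ∈ π, i ∈ V
  eq_of_mem : ∀ {V W}, V ∈ π → W ∈ π → ∀ {i}, i ∈ V → i ∈ W → V = W

theorem isPartitionOf_singleton (hS : S.Nonempty) : IsPartitionOf S {S} where
  nonempty V hV := by rwa [mem_singleton.1 hV]
  subset V hV := by rw [mem_singleton.1 hV]
  exists_mem i hi := ⟨S, mem_singleton_self S, hi⟩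
  eq_of_mem hV hW _ _ _ := by rw [mem_singleton.1 hV, mem_singleton.1 hW]

theorem IsPartitionOf.eq_singleton (hπ : IsPartitionOf S π) (hS : S ∈ π) : π = {S} := by
  refine eq_singleton_iff_unique_mem.2 ⟨hS, fun V hV => ?_⟩
  obtain ⟨v, hv⟩ := hπ.nonempty V hV
  exact hπ.eq_of_mem hV hS hv (hπ.subset V hV hv)

theorem IsPartitionOf.disjoint (hπ : IsPartitionOf S π) {V W : Finset α} (hV : V ∈ π)
    (hW : W ∈ π) (hVW : V ≠ W) : Disjoint V W :=
  disjoint_left.2 fun _ hiV hiW => hVW (hπ.eq_of_mem hV hW hiV hiW)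

variable {G : Finset (Finset α)}

open Classical in
noncomputable def linkClass (T : Finset α) (G : Finset (Finset α)) (i : α) : Finset α :=
  T.filter (Linked G i)

theorem mem_linkClass {i j : α} : j ∈ linkClass T G i ↔ j ∈ T ∧ Linked G i j := by
  classical
  simp [linkClass]

theorem linkClass_eq_of_linked {i i' : α} (h : Linked G i i') :
    linkClass T G i = linkClass T G i' := by
  ext j
  simp only [mem_linkClass]
  exact and_congr_right fun _ => ⟨h.symm.trans, h.trans⟩

variable [DecidableEq α]

noncomputable def linkPartition (T : Finset α) (G : Finset (Finset α)) : Finset (Finset α) :=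
  T.image (linkClass T G)

theorem mem_linkPartition {B : Finset α} :
    B ∈ linkPartition T G ↔ ∃ i ∈ T, linkClass T G i = B :=
  mem_image

theorem linked_of_mem_linkPartition {B : Finset α} (hB : B ∈ linkPartition T G) {i j : α}
    (hi : i ∈ B) (hj : j ∈ B) : Linked G i j := by
  obtain ⟨k, -, rfl⟩ := mem_linkPartition.1 hB
  exact (mem_linkClass.1 hi).2.symm.trans (mem_linkClass.1 hj).2

theorem isPartitionOf_linkPartition (T : Finset α) (G : Finset (Finset α)) :
    IsPartitionOf T (linkPartition T G) where
  nonempty B hB := by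
    obtain ⟨i, hi, rfl⟩ := mem_linkPartition.1 hB
    exact ⟨i, mem_linkClass.2 ⟨hi, .refl i⟩⟩
  subset B hB j hj := by
    obtain ⟨i, -, rfl⟩ := mem_linkPartition.1 hB
    exact (mem_linkClass.1 hj).1
  exists_mem i hi := ⟨_, mem_linkPartition.2 ⟨i, hi, rfl⟩, mem_linkClass.2 ⟨hi, .refl i⟩⟩
  eq_of_mem hV hW k hkV hkW := by
    obtain ⟨i, -, rfl⟩ := mem_linkPartition.1 hV
    obtain ⟨i', -, rfl⟩ := mem_linkPartition.1 hW
    exact linkClass_eq_of_linked ((mem_linkClass.1 hkV).2.trans (mem_linkClass.1 hkW).2.symm)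

theorem linkPartition_eq_iff (hσ : IsPartitionOf T σ) :
    linkPartition T G = σ ↔ ∀ i ∈ T, ∀ j ∈ T, (Linked G i j ↔ ∃ B ∈ σ, i ∈ B ∧ j ∈ B) := by
  constructor
  · rintro rfl i hi j hj
    refine ⟨fun hij => ⟨_, mem_linkPartition.2 ⟨i, hi, rfl⟩, mem_linkClass.2 ⟨hi, .refl i⟩,
      mem_linkClass.2 ⟨hj, hij⟩⟩, ?_⟩
    exact fun ⟨B, hB, hiB, hjB⟩ => linked_of_mem_linkPartition hB hiB hjB
  · intro h
    have hclass : ∀ B ∈ σ, ∀ i ∈ B, linkClass T G i = B := by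
      intro B hB i hiB
      have hi := hσ.subset B hB hiB
      ext j
      rw [mem_linkClass]
      refine ⟨fun ⟨hj, hij⟩ => ?_, fun hjB =>
        ⟨hσ.subset B hB hjB, (h i hi j (hσ.subset B hB hjB)).2 ⟨B, hB, hiB, hjB⟩⟩⟩
      obtain ⟨B', hB', hiB', hjB'⟩ := (h i hi j hj).1 hij
      rwa [hσ.eq_of_mem hB hB' hiB hiB']
    ext B
    rw [mem_linkPartition]
    constructor
    · rintro ⟨i, hi, rfl⟩
      obtain ⟨B', hB', hiB'⟩ := hσ.exists_mem i hi
      rwa [hclass B' hB' i hiB']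
    · intro hB
      obtain ⟨i, hi⟩ := hσ.nonempty B hB
      exact ⟨i, hσ.subset B hB hi, hclass B hB i hi⟩

theorem linkPartition_eq_singleton_iff (hT : T.Nonempty) :
    linkPartition T G = {T} ↔ ∀ i ∈ T, ∀ j ∈ T, Linked G i j := by
  rw [linkPartition_eq_iff (isPartitionOf_singleton hT)]
  simp only [mem_singleton, exists_eq_left]
  exact forall₂_congr fun i hi => forall₂_congr fun j hj => by simp [hi, hj]

theorem Linked.mem_and_linked_filter (hσ : IsPartitionOf T σ) (hG : ∀ X ∈ G, ∃ B ∈ σ, X ⊆ B)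
    {B : Finset α} (hB : B ∈ σ) {i j : α} (hi : i ∈ B) (h : Linked G i j) :
    j ∈ B ∧ Linked (G.filter (· ⊆ B)) i j := by
  induction h with
  | refl => exact ⟨hi, .refl i⟩
  | tail _ hwv ih =>
    obtain ⟨hwB, hiw⟩ := ih
    obtain ⟨X, hX, hwX, hvX⟩ := hwv
    obtain ⟨B', hB', hXB'⟩ := hG X hX
    obtain rfl := hσ.eq_of_mem hB' hB (hXB' hwX) hwB
    exact ⟨hXB' hvX, hiw.trans (Linked.of_mem (mem_filter.2 ⟨hX, hXB'⟩) hwX hvX)⟩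

theorem linkPartition_eq_iff_forall_subset (hσ : IsPartitionOf T σ)
    (hG : ∀ X ∈ G, X.Nonempty ∧ X ⊆ T) :
    linkPartition T G = σ ↔
      (∀ X ∈ G, ∃ B ∈ σ, X ⊆ B) ∧ ∀ B ∈ σ, linkPartition B (G.filter (· ⊆ B)) = {B} := by
  rw [linkPartition_eq_iff hσ]
  constructor
  · intro h
    have hsub : ∀ X ∈ G, ∃ B ∈ σ, X ⊆ B := by
      intro X hX
      obtain ⟨⟨x, hx⟩, hXT⟩ := hG X hX
      obtain ⟨B, hB, hxB⟩ := hσ.exists_mem x (hXT hx)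
      refine ⟨B, hB, fun y hy => ?_⟩
      obtain ⟨B', hB', hxB', hyB'⟩ := (h x (hXT hx) y (hXT hy)).1 (.of_mem hX hx hy)
      rwa [hσ.eq_of_mem hB hB' hxB hxB']
    refine ⟨hsub, fun B hB => (linkPartition_eq_singleton_iff (hσ.nonempty B hB)).2 ?_⟩
    intro i hi j hj
    have hij := (h i (hσ.subset B hB hi) j (hσ.subset B hB hj)).2 ⟨B, hB, hi, hj⟩
    exact (hij.mem_and_linked_filter hσ hsub hB hi).2
  · rintro ⟨hsub, hloc⟩ i hi j hj
    refine ⟨fun hij => ?_, fun ⟨B, hB, hiB, hjB⟩ => ?_⟩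
    · obtain ⟨B, hB, hiB⟩ := hσ.exists_mem i hi
      exact ⟨B, hB, hiB, (hij.mem_and_linked_filter hσ hsub hB hiB).1⟩
    · exact ((linkPartition_eq_singleton_iff (hσ.nonempty B hB)).1 (hloc B hB) i hiB j hjB).mono
        (filter_subset _ _)

end Partition

section Noncrossing

open Finset

variable {α β : Type*} [LinearOrder α] [LinearOrder β] {S : Finset α} {T : Finset β}
  {π : Finset (Finset α)} {σ : Finset (Finset β)}

structure IsNCPartitionOf (S : Finset α) (π : Finset (Finset α)) : Prop
    extends IsPartitionOf S π where
  noncrossing : ∀ V ∈ π, ∀ W ∈ π, Crossing (V : Set α) W → V = W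

theorem isNCPartitionOf_singleton (hS : S.Nonempty) : IsNCPartitionOf S {S} where
  toIsPartitionOf := isPartitionOf_singleton hS
  noncrossing V hV W hW _ := by rw [mem_singleton.1 hV, mem_singleton.1 hW]

theorem isNCPartitionOf_linkPartition {G : Finset (Finset α)}
    (hG : ∀ X ∈ G, ∀ Y ∈ G, Disjoint X Y → ¬ Crossing (X : Set α) Y) (T : Finset α) :
    IsNCPartitionOf T (linkPartition T G) where
  toIsPartitionOf := isPartitionOf_linkPartition T G
  noncrossing B hB C hC h := by
    obtain ⟨i, -, rfl⟩ := mem_linkPartition.1 hB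
    obtain ⟨j, -, rfl⟩ := mem_linkPartition.1 hC
    have link : ∀ {k l}, k ∈ linkClass T G l → Linked G l k := fun h => (mem_linkClass.1 h).2
    rcases h with ⟨p, hp, q, hq, r, hr, u, hu, hpq, hqr, hru⟩ |
      ⟨p, hp, q, hq, r, hr, u, hu, hpq, hqr, hru⟩
    · have := linked_of_interleaved hG hpq hqr hru ((link hp).symm.trans (link hr))
        ((link hq).symm.trans (link hu))
      exact linkClass_eq_of_linked ((link hp).trans (this.trans (link hq).symm))
    · have := linked_of_interleaved hG hpq hqr hru ((link hp).symm.trans (link hr))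
        ((link hq).symm.trans (link hu))
      exact linkClass_eq_of_linked ((link hq).trans (this.symm.trans (link hp).symm))

/-- Monotone maps send crossings between sets lying over distinct blocks of `σ` to crossings
of these blocks. -/
theorem IsNCPartitionOf.eq_of_crossing (hσ : IsNCPartitionOf T σ) {g : α → β} (hg : Monotone g)
    {B B' : Finset β} (hB : B ∈ σ) (hB' : B' ∈ σ) {X Y : Set α} (hX : g '' X ⊆ B)
    (hY : g '' Y ⊆ B') (h : Crossing X Y) : B = B' := by
  by_contra hne
  have hXY : Disjoint (g '' X) (g '' Y) :=
    (disjoint_coe.2 (hσ.disjoint hB hB' hne)).mono hX hY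
  exact hne (hσ.noncrossing B hB B' hB' ((h.image hg hXY).mono hX hY))

theorem IsNCPartitionOf.linkPartition_image (hπ : IsNCPartitionOf S π) {g : α → β}
    (hg : Monotone g) (T : Finset β) :
    IsNCPartitionOf T (linkPartition T (π.image (image g))) := by
  refine isNCPartitionOf_linkPartition ?_ T
  simp only [forall_mem_image]
  intro V hV W hW hVW h
  rw [coe_image, coe_image] at h
  obtain rfl := hπ.noncrossing V hV W hW (h.of_image hg)
  exact (hπ.nonempty V hV).image g |>.ne_empty (disjoint_self.1 hVW)

theorem IsNCPartitionOf.comap (hσ : IsNCPartitionOf T σ) {g : α → β} (hg : Monotone g)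
    (hST : S.image g = T) : IsNCPartitionOf S (σ.image fun B => S.filter (g · ∈ B)) where
  nonempty V hV := by
    obtain ⟨B, hB, rfl⟩ := mem_image.1 hV
    obtain ⟨b, hb⟩ := hσ.nonempty B hB
    obtain ⟨z, hz, rfl⟩ := mem_image.1 (hST ▸ hσ.subset B hB hb)
    exact ⟨z, mem_filter.2 ⟨hz, hb⟩⟩
  subset V hV := by
    obtain ⟨B, -, rfl⟩ := mem_image.1 hV
    exact filter_subset _ _
  exists_mem i hi := by
    obtain ⟨B, hB, hiB⟩ := hσ.exists_mem (g i) (hST ▸ mem_image_of_mem g hi)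
    exact ⟨_, mem_image_of_mem _ hB, mem_filter.2 ⟨hi, hiB⟩⟩
  eq_of_mem hV hW i hiV hiW := by
    obtain ⟨B, hB, rfl⟩ := mem_image.1 hV
    obtain ⟨B', hB', rfl⟩ := mem_image.1 hW
    rw [hσ.eq_of_mem hB hB' (mem_filter.1 hiV).2 (mem_filter.1 hiW).2]
  noncrossing V hV W hW h := by
    obtain ⟨B, hB, rfl⟩ := mem_image.1 hV
    obtain ⟨B', hB', rfl⟩ := mem_image.1 hW
    have himage : ∀ C : Finset β, g '' ↑(S.filter (g · ∈ C)) ⊆ C := by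
      rintro C _ ⟨z, hz, rfl⟩
      exact (mem_filter.1 hz).2
    rw [hσ.eq_of_crossing hg hB hB' (himage B) (himage B') h]

variable {g : α → β}

theorem IsNCPartitionOf.filter_image_subset (hπ : IsNCPartitionOf S π) (hσ : IsPartitionOf T σ)
    (hπσ : ∀ V ∈ π, ∃ B ∈ σ, V.image g ⊆ B) {B : Finset β}
    (hB : B ∈ σ) : IsNCPartitionOf (S.filter (g · ∈ B)) (π.filter (·.image g ⊆ B)) where
  nonempty V hV := hπ.nonempty V (mem_filter.1 hV).1
  subset V hV x hx := mem_filter.2 ⟨hπ.subset V (mem_filter.1 hV).1 hx,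
    image_subset_iff.1 (mem_filter.1 hV).2 x hx⟩
  exists_mem i hi := by
    obtain ⟨hiS, hiB⟩ := mem_filter.1 hi
    obtain ⟨V, hV, hiV⟩ := hπ.exists_mem i hiS
    obtain ⟨B', hB', hVB'⟩ := hπσ V hV
    obtain rfl := hσ.eq_of_mem hB' hB (hVB' (mem_image_of_mem g hiV)) hiB
    exact ⟨V, mem_filter.2 ⟨hV, hVB'⟩, hiV⟩
  eq_of_mem hV hW _ hiV hiW := hπ.eq_of_mem (mem_filter.1 hV).1 (mem_filter.1 hW).1 hiV hiW
  noncrossing V hV W hW := hπ.noncrossing V (mem_filter.1 hV).1 W (mem_filter.1 hW).1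

theorem IsNCPartitionOf.biUnion (hσ : IsNCPartitionOf T σ) (hg : Monotone g)
    (hST : Set.MapsTo g S T) {p : σ → Finset (Finset α)}
    (hp : ∀ B : σ, IsNCPartitionOf (S.filter (g · ∈ B.1)) (p B)) :
    IsNCPartitionOf S (univ.biUnion p) := by
  have hsub : ∀ {B : σ} {V}, V ∈ p B → ∀ x ∈ V, x ∈ S ∧ g x ∈ B.1 :=
    fun hV x hx => mem_filter.1 ((hp _).subset _ hV hx)
  have himage : ∀ {B : σ} {V}, V ∈ p B → g '' V ⊆ B.1 := by
    rintro B V hV _ ⟨x, hx, rfl⟩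
    exact (hsub hV x hx).2
  have mem : ∀ {V}, V ∈ univ.biUnion p ↔ ∃ B, V ∈ p B := by simp
  exact {
    nonempty := fun V hV => by
      obtain ⟨B, hV⟩ := mem.1 hV
      exact (hp B).nonempty V hV
    subset := fun V hV x hx => by
      obtain ⟨B, hV⟩ := mem.1 hV
      exact (hsub hV x hx).1
    exists_mem := fun i hi => by
      obtain ⟨B, hB, hiB⟩ := hσ.exists_mem (g i) (hST hi)
      obtain ⟨V, hV, hiV⟩ := (hp ⟨B, hB⟩).exists_mem i (mem_filter.2 ⟨hi, hiB⟩)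
      exact ⟨V, mem.2 ⟨_, hV⟩, hiV⟩
    eq_of_mem := fun hV hW i hiV hiW => by
      obtain ⟨B, hV⟩ := mem.1 hV
      obtain ⟨B', hW⟩ := mem.1 hW
      obtain rfl : B = B' :=
        Subtype.ext (hσ.eq_of_mem B.2 B'.2 (hsub hV i hiV).2 (hsub hW i hiW).2)
      exact (hp B).eq_of_mem hV hW hiV hiW
    noncrossing := fun V hV W hW h => by
      obtain ⟨B, hV⟩ := mem.1 hV
      obtain ⟨B', hW⟩ := mem.1 hW
      obtain rfl : B = B' :=
        Subtype.ext (hσ.eq_of_crossing hg B.2 B'.2 (himage hV) (himage hW) h)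
      exact (hp B).noncrossing V hV W hW h }

theorem biUnion_filter_image_subset (hπσ : ∀ V ∈ π, ∃ B ∈ σ, V.image g ⊆ B) :
    univ.biUnion (fun B : σ => π.filter (·.image g ⊆ B.1)) = π := by
  ext V
  simp only [mem_biUnion, mem_univ, true_and, mem_filter]
  refine ⟨fun ⟨_, hV, _⟩ => hV, fun hV => ?_⟩
  obtain ⟨B, hB, hVB⟩ := hπσ V hV
  exact ⟨⟨B, hB⟩, hV, hVB⟩

theorem filter_image_subset_biUnion (hσ : IsPartitionOf T σ) {p : σ → Finset (Finset α)}
    (hp : ∀ B : σ, ∀ V ∈ p B, V.Nonempty ∧ V.image g ⊆ B.1) (B : σ) :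
    (univ.biUnion p).filter (·.image g ⊆ B.1) = p B := by
  ext V
  simp only [mem_filter, mem_biUnion, mem_univ, true_and]
  refine ⟨fun ⟨⟨B', hV⟩, hVB⟩ => ?_, fun hV => ⟨⟨B, hV⟩, (hp B V hV).2⟩⟩
  obtain ⟨x, hx⟩ := (hp B' V hV).1
  obtain rfl : B' = B := Subtype.ext (hσ.eq_of_mem B'.2 B.2
    ((hp B' V hV).2 (mem_image_of_mem g hx)) (hVB (mem_image_of_mem g hx)))
  exact hV

variable [Fintype α]

open Classical in
noncomputable def ncPartitions (S : Finset α) : Finset (Finset (Finset α)) :=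
  univ.filter (IsNCPartitionOf S)

theorem mem_ncPartitions : π ∈ ncPartitions S ↔ IsNCPartitionOf S π := by
  simp [ncPartitions]

/-- The non-crossing partitions of `S` whose blocks, mapped by `g`, generate the partition `σ`
of `T`; for `g` the block map of an interval partition `θ` and `σ = {T}` these are the `π` with
`π ∨ θ = 1`. -/
noncomputable def ncFiber (g : α → β) (S : Finset α) (T : Finset β) (σ : Finset (Finset β)) :
    Finset (Finset (Finset α)) :=
  (ncPartitions S).filter fun π => linkPartition T (π.image (image g)) = σ

theorem mem_ncFiber_iff (hST : Set.MapsTo g S T) (hσ : IsPartitionOf T σ) :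
    π ∈ ncFiber g S T σ ↔ IsNCPartitionOf S π ∧ (∀ V ∈ π, ∃ B ∈ σ, V.image g ⊆ B) ∧
      ∀ B ∈ σ, linkPartition B ((π.filter (·.image g ⊆ B)).image (image g)) = {B} := by
  rw [ncFiber, mem_filter, mem_ncPartitions]
  refine and_congr_right fun hπ => ?_
  rw [linkPartition_eq_iff_forall_subset hσ, forall_mem_image]
  · simp only [filter_image]
  · simp only [forall_mem_image]
    exact fun V hV => ⟨(hπ.nonempty V hV).image g,
      image_subset_iff.2 fun x hx => hST (hπ.subset V hV hx)⟩

/-- The sum over the fiber of `σ` factorizes over the blocks of `σ`: a partition in the fiber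
is the same as a choice, for each block `B`, of a partition of the part of `S` over `B` whose
image generates `{B}`. -/
theorem sum_ncFiber_eq_prod {R : Type*} [CommSemiring R] (hg : Monotone g)
    (hST : Set.MapsTo g S T) (hσ : IsNCPartitionOf T σ) (w : Finset α → R) :
    ∑ π ∈ ncFiber g S T σ, ∏ V ∈ π, w V =
      ∏ B ∈ σ, ∑ π ∈ ncFiber g (S.filter (g · ∈ B)) B {B}, ∏ V ∈ π, w V := by
  have hsub : ∀ {B : σ} {π}, π ∈ ncFiber g (S.filter (g · ∈ B.1)) B {B.1} →
      IsNCPartitionOf (S.filter (g · ∈ B.1)) π ∧ ∀ V ∈ π, V.Nonempty ∧ V.image g ⊆ B.1 := by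
    intro B π hπ
    have hπ := (mem_ncPartitions.1 (mem_filter.1 hπ).1)
    exact ⟨hπ, fun V hV => ⟨hπ.nonempty V hV, image_subset_iff.2 fun x hx =>
      (mem_filter.1 (hπ.subset V hV hx)).2⟩⟩
  rw [← prod_coe_sort σ, prod_univ_sum]
  refine sum_nbij' (fun π B => π.filter (·.image g ⊆ B.1)) (fun p => univ.biUnion p)
    (fun π hπ => ?_) (fun p hp => ?_) (fun π hπ => ?_) (fun p hp => ?_) (fun π hπ => ?_)
  · obtain ⟨hπ, hπσ, hlink⟩ := (mem_ncFiber_iff hST hσ.toIsPartitionOf).1 hπ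
    refine Fintype.mem_piFinset.2 fun B => mem_filter.2 ⟨mem_ncPartitions.2 ?_, hlink B B.2⟩
    exact hπ.filter_image_subset hσ.toIsPartitionOf hπσ B.2
  · rw [Fintype.mem_piFinset] at hp
    refine (mem_ncFiber_iff hST hσ.toIsPartitionOf).2 ⟨hσ.biUnion hg hST fun B => (hsub (hp B)).1,
      fun V hV => ?_, fun B hB => ?_⟩
    · obtain ⟨B, -, hV⟩ := mem_biUnion.1 hV
      exact ⟨B, B.2, ((hsub (hp B)).2 V hV).2⟩
    · rw [filter_image_subset_biUnion hσ.toIsPartitionOf (fun B => (hsub (hp B)).2) ⟨B, hB⟩]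
      exact (mem_filter.1 (hp ⟨B, hB⟩)).2
  · exact biUnion_filter_image_subset ((mem_ncFiber_iff hST hσ.toIsPartitionOf).1 hπ).2.1
  · rw [Fintype.mem_piFinset] at hp
    exact funext (filter_image_subset_biUnion hσ.toIsPartitionOf fun B => (hsub (hp B)).2)
  · obtain ⟨hπ, hπσ, -⟩ := (mem_ncFiber_iff hST hσ.toIsPartitionOf).1 hπ
    conv_lhs => rw [← biUnion_filter_image_subset hπσ]
    refine prod_biUnion fun B _ B' _ hne => disjoint_left.2 fun V hVB hVB' => hne ?_
    obtain ⟨x, hx⟩ := hπ.nonempty V (mem_filter.1 hVB).1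
    exact Subtype.ext (hσ.eq_of_mem B.2 B'.2 ((mem_filter.1 hVB).2 (mem_image_of_mem g hx))
      ((mem_filter.1 hVB').2 (mem_image_of_mem g hx)))

end Noncrossing

section Transport

open Finset

variable {α β : Type*} [LinearOrder α] [LinearOrder β]

theorem crossing_map_iff (e : α ↪o β) {V W : Finset α} :
    Crossing (↑(V.map e.toEmbedding) : Set β) ↑(W.map e.toEmbedding) ↔ Crossing (V : Set α) W := by
  rw [coe_map, coe_map]
  exact StrictMono.crossing_image_iff e.strictMono

variable {S : Finset α} {π : Finset (Finset α)}

theorem IsNCPartitionOf.map (h : IsNCPartitionOf S π) (e : α ↪o β) :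
    IsNCPartitionOf (S.map e.toEmbedding) (π.map (mapEmbedding e.toEmbedding).toEmbedding) where
  nonempty V' hV' := by
    obtain ⟨V, hV, rfl⟩ := mem_map.1 hV'
    exact (h.nonempty V hV).map
  subset V' hV' := by
    obtain ⟨V, hV, rfl⟩ := mem_map.1 hV'
    exact map_subset_map.2 (h.subset V hV)
  exists_mem i' hi' := by
    obtain ⟨i, hi, rfl⟩ := mem_map.1 hi'
    obtain ⟨V, hV, hiV⟩ := h.exists_mem i hi
    exact ⟨_, mem_map_of_mem _ hV, mem_map_of_mem _ hiV⟩
  eq_of_mem {V' W'} hV' hW' i' hiV' hiW' := by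
    obtain ⟨V, hV, rfl⟩ := mem_map.1 hV'
    obtain ⟨W, hW, rfl⟩ := mem_map.1 hW'
    obtain ⟨i, -, rfl⟩ := mem_map.1 hiV'
    rw [h.eq_of_mem hV hW ((mem_map' _).1 hiV') ((mem_map' _).1 hiW')]
  noncrossing V' hV' W' hW' hVW := by
    obtain ⟨V, hV, rfl⟩ := mem_map.1 hV'
    obtain ⟨W, hW, rfl⟩ := mem_map.1 hW'
    rw [h.noncrossing V hV W hW ((crossing_map_iff e).1 hVW)]

theorem IsNCPartitionOf.of_map (e : α ↪o β)
    (h : IsNCPartitionOf (S.map e.toEmbedding) (π.map (mapEmbedding e.toEmbedding).toEmbedding)) :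
    IsNCPartitionOf S π where
  nonempty V hV := map_nonempty.1 (h.nonempty _ (mem_map_of_mem _ hV))
  subset V hV := map_subset_map.1 (h.subset _ (mem_map_of_mem _ hV))
  exists_mem i hi := by
    obtain ⟨V', hV', hiV'⟩ := h.exists_mem (e i) (mem_map_of_mem _ hi)
    obtain ⟨V, hV, rfl⟩ := mem_map.1 hV'
    exact ⟨V, hV, (mem_map' _).1 hiV'⟩
  eq_of_mem hV hW _ hiV hiW := (mapEmbedding e.toEmbedding).injective
    (h.eq_of_mem (mem_map_of_mem _ hV) (mem_map_of_mem _ hW) (mem_map_of_mem _ hiV)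
      (mem_map_of_mem _ hiW))
  noncrossing V hV W hW hVW := (mapEmbedding e.toEmbedding).injective
    (h.noncrossing _ (mem_map_of_mem _ hV) _ (mem_map_of_mem _ hW) ((crossing_map_iff e).2 hVW))

theorem ncPartitions_map [Fintype α] [Fintype β] (e : α ↪o β) (S : Finset α) :
    ncPartitions (S.map e.toEmbedding) =
      (ncPartitions S).image (map (mapEmbedding e.toEmbedding).toEmbedding) := by
  ext π'
  rw [mem_ncPartitions, mem_image]
  constructor
  · intro h
    obtain ⟨π, -, rfl⟩ : ∃ π ⊆ univ, π' = π.map (mapEmbedding e.toEmbedding).toEmbedding := by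
      refine subset_map_iff.1 fun V' hV' => ?_
      obtain ⟨V, -, rfl⟩ := subset_map_iff.1 (h.subset V' hV')
      exact mem_map_of_mem _ (mem_univ V)
    exact ⟨π, mem_ncPartitions.2 (h.of_map e), rfl⟩
  · rintro ⟨π, hπ, rfl⟩
    exact (mem_ncPartitions.1 hπ).map e

theorem NC_eq_ncPartitions_univ (n : ℕ) : NC n = ncPartitions (univ : Finset (Fin n)) := by
  ext π
  simp only [NC, mem_filter, mem_univ, true_and, mem_ncPartitions]
  constructor
  · rintro ⟨⟨hne, huniq⟩, hnc⟩
    exact {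
      nonempty := hne
      subset := fun _ _ => subset_univ _
      exists_mem := fun i _ => let ⟨V, hV, _⟩ := huniq i; ⟨V, hV⟩
      eq_of_mem := fun hV hW i hiV hiW => (huniq i).unique ⟨hV, hiV⟩ ⟨hW, hiW⟩
      noncrossing := fun V hV W hW h => h.elim
        (fun ⟨p, hp, q, hq, r, hr, u, hu, h⟩ => hnc p q r u h.1 h.2.1 h.2.2 V hV W hW hp hr hq hu)
        (fun ⟨p, hp, q, hq, r, hr, u, hu, h⟩ =>
          (hnc p q r u h.1 h.2.1 h.2.2 W hW V hV hp hr hq hu).symm) }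
  · intro h
    refine ⟨⟨h.nonempty, fun i => ?_⟩, fun p q r u h1 h2 h3 V hV W hW hp hr hq hu =>
      h.noncrossing V hV W hW (.inl ⟨p, hp, q, hq, r, hr, u, hu, h1, h2, h3⟩)⟩
    obtain ⟨V, hV, hiV⟩ := h.exists_mem i (mem_univ i)
    exact ⟨V, ⟨hV, hiV⟩, fun W ⟨hW, hiW⟩ => h.eq_of_mem hW hV hiW hiV⟩

end Transport

section Tuples

theorem sort_eq_flatMap_sort_filter {α β : Type*} [LinearOrder α] [LinearOrder β] {g : α → β}
    (hg : Monotone g) (S : Finset α) :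
    S.sort = (S.image g).sort.flatMap fun j => (S.filter (g · = j)).sort := by
  refine (Finset.sortedLT_sort S).eq_of_mem_iff ?_ fun z => ?_
  · rw [List.sortedLT_iff_pairwise, List.pairwise_flatMap]
    refine ⟨fun j _ => (Finset.sortedLT_sort _).pairwise,
      (Finset.sortedLT_sort _).pairwise.imp ?_⟩
    intro j j' hjj' x hx y hy
    rw [Finset.mem_sort, Finset.mem_filter] at hx hy
    exact hg.reflect_lt (hx.2 ▸ hy.2 ▸ hjj')
  · simp only [Finset.mem_sort, List.mem_flatMap, Finset.mem_filter, Finset.mem_image]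
    exact ⟨fun hz => ⟨g z, ⟨z, hz, rfl⟩, hz, rfl⟩, fun ⟨_, _, hz, _⟩ => hz⟩

theorem ofFn_restrict {γ : Type*} {s : ℕ} (x : Fin s → γ) (V : Finset (Fin s)) :
    List.ofFn (restrict x V) = V.sort.map x := by
  rw [List.ofFn_eq_map, ← Finset.listMap_orderEmbOfFin_finRange V rfl, List.map_map]
  rfl

theorem apply_eq_of_ofFn_eq {A γ : Type*} (F : ∀ m, (Fin m → A) → γ) {m m' : ℕ} {f : Fin m → A}
    {f' : Fin m' → A} (h : List.ofFn f = List.ofFn f') : F m f = F m' f' := by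
  cases List.ofFn_inj'.1 h
  rfl

end Tuples

section Cumulants

variable {A R : Type*} [Ring A] [CommRing R] {s n : ℕ}

theorem MomentCumulant.restrict {φ : A → R} {κ : ∀ m, (Fin m → A) → R}
    (hκ : MomentCumulant φ κ) (x : Fin s → A) {S : Finset (Fin s)} (hS : S.Nonempty) :
    φ (List.ofFn (restrict x S)).prod = ∑ π ∈ ncPartitions S, ∏ V ∈ π, κ V.card (restrict x V) := by
  set e := S.orderEmbOfFin rfl
  have hNC : ncPartitions S = (ncPartitions Finset.univ).image
      (Finset.map (Finset.mapEmbedding e.toEmbedding).toEmbedding) := by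
    rw [← ncPartitions_map, Finset.map_orderEmbOfFin_univ]
  rw [hκ S.card (Finset.card_pos.2 hS), NC_eq_ncPartitions_univ, hNC,
    Finset.sum_image fun _ _ _ _ h => Finset.map_injective _ h]
  refine Finset.sum_congr rfl fun τ _ => ?_
  rw [Finset.prod_map]
  refine Finset.prod_congr rfl fun W _ => apply_eq_of_ofFn_eq κ ?_
  rw [ofFn_restrict, ofFn_restrict, RelEmbedding.coe_toEmbedding, Finset.mapEmbedding_apply,
    ← (e.strictMono.strictMonoOn _).map_finsetSort, List.map_map]
  rfl

theorem prod_ofFn_restrict_eq (x : Fin s → A) (a : Fin n → A) {g : Fin s → Fin n}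
    (hg : Monotone g) {S : Finset (Fin s)} {T : Finset (Fin n)} (hST : S.image g = T)
    (ha : ∀ j ∈ T, a j = (List.ofFn (restrict x (S.filter (g · = j)))).prod) :
    (List.ofFn (restrict a T)).prod = (List.ofFn (restrict x S)).prod := by
  rw [ofFn_restrict, ofFn_restrict, sort_eq_flatMap_sort_filter hg, hST, List.map_flatMap,
    List.flatMap, List.prod_flatten, List.map_map]
  congr 1
  refine List.map_congr_left fun j hj => ?_
  rw [ha j ((Finset.mem_sort _).1 hj), ofFn_restrict]
  rfl

theorem cumulant_restrict_eq_sum_ncFiber {φ : A → R} {κ : ∀ m, (Fin m → A) → R}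
    (hκ : MomentCumulant φ κ) (x : Fin s → A) (a : Fin n → A) {g : Fin s → Fin n}
    (hg : Monotone g) (S : Finset (Fin s)) {T : Finset (Fin n)} (hST : S.image g = T)
    (hT : T.Nonempty) (ha : ∀ j ∈ T, a j = (List.ofFn (restrict x (S.filter (g · = j)))).prod) :
    κ T.card (restrict a T) = ∑ π ∈ ncFiber g S T {T}, ∏ V ∈ π, κ V.card (restrict x V) := by
  induction S using Finset.strongInduction generalizing T with
  | H S ih =>
  have hS : S.Nonempty := Finset.image_nonempty.1 (hST ▸ hT)
  have hmaps : Set.MapsTo g S T := fun z hz => hST ▸ Finset.mem_image_of_mem g hz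
  have hT1 : {T} ∈ ncPartitions T := mem_ncPartitions.2 (isNCPartitionOf_singleton hT)
  have hsplit : ∑ σ ∈ ncPartitions T, ∏ B ∈ σ, κ B.card (restrict a B) =
      ∑ σ ∈ ncPartitions T, ∑ π ∈ ncFiber g S T σ, ∏ V ∈ π, κ V.card (restrict x V) := by
    rw [← hκ.restrict a hT, prod_ofFn_restrict_eq x a hg hST ha, hκ.restrict x hS]
    exact (Finset.sum_fiberwise_of_maps_to
      (fun π hπ => mem_ncPartitions.2 ((mem_ncPartitions.1 hπ).linkPartition_image hg T)) _).symm
  have hblocks : ∀ σ ∈ (ncPartitions T).erase {T}, ∏ B ∈ σ, κ B.card (restrict a B) =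
      ∑ π ∈ ncFiber g S T σ, ∏ V ∈ π, κ V.card (restrict x V) := by
    intro σ hσ
    obtain ⟨hσT, hσ⟩ := Finset.mem_erase.1 hσ
    replace hσ := mem_ncPartitions.1 hσ
    rw [sum_ncFiber_eq_prod hg hmaps hσ]
    refine Finset.prod_congr rfl fun B hB => ih _ ?_ ?_ (hσ.nonempty B hB) fun j hj => ?_
    · have hBT : B ⊂ T :=
        (hσ.subset B hB).ssubset_of_ne fun h => hσT (hσ.eq_singleton (h ▸ hB))
      obtain ⟨j, hjT, hjB⟩ := Finset.exists_of_ssubset hBT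
      obtain ⟨z, hz, rfl⟩ := Finset.mem_image.1 (hST ▸ hjT)
      exact Finset.filter_ssubset.2 ⟨z, hz, hjB⟩
    · refine (Finset.filter_image (p := (· ∈ B))).symm.trans ?_
      rw [hST, Finset.filter_mem_eq_inter, Finset.inter_eq_right.2 (hσ.subset B hB)]
    · have hfib : (S.filter (g · ∈ B)).filter (g · = j) = S.filter (g · = j) := by
        rw [Finset.filter_filter]
        exact Finset.filter_congr fun z _ => ⟨And.right, fun h => ⟨h ▸ hj, h⟩⟩
      rw [hfib, ha j (hσ.subset B hB hj)]
  rw [← Finset.add_sum_erase _ _ hT1, ← Finset.add_sum_erase _ _ hT1,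
    Finset.sum_congr rfl hblocks, Finset.prod_singleton] at hsplit
  exact add_right_cancel hsplit

end Cumulants

section Intervals

variable {n s : ℕ} {sfun : Fin n → ℕ}

theorem mem_intervalBlock_iff (hmono : Monotone sfun) {j : Fin n} {m : Fin s} :
    m ∈ intervalBlock sfun j ↔ (∀ i < j, sfun i ≤ m) ∧ (m : ℕ) < sfun j := by
  simp only [intervalBlock, Finset.mem_filter, Finset.mem_univ, true_and]
  refine and_congr_left fun _ => ?_
  split_ifs with hj
  · exact ⟨fun _ i hi => absurd hi (by simp [Fin.lt_def, hj]), fun _ => Nat.zero_le _⟩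
  · refine ⟨fun h i hi => (hmono (Fin.mk_le_mk.2 (by omega))).trans h,
      fun h => h _ (Fin.mk_lt_mk.2 (by omega))⟩

theorem exists_monotone_intervalBlock_eq (hmono : StrictMono sfun)
    (hcover : ∀ m : Fin s, ∃ j, (m : ℕ) < sfun j) :
    ∃ g : Fin s → Fin n, Monotone g ∧ ∀ j, intervalBlock sfun j = Finset.univ.filter (g · = j) := by
  have hlt : ∀ {j j' : Fin n} {m m' : Fin s}, j < j' → m ∈ intervalBlock sfun j →
      m' ∈ intervalBlock sfun j' → m < m' := fun hjj' hm hm' =>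
    Fin.lt_def.2 (((mem_intervalBlock_iff hmono.monotone).1 hm).2.trans_le
      (((mem_intervalBlock_iff hmono.monotone).1 hm').1 _ hjj'))
  have hex : ∀ m : Fin s, ∃ j, m ∈ intervalBlock sfun j := by
    intro m
    have hne : (Finset.univ.filter fun j => (m : ℕ) < sfun j).Nonempty :=
      let ⟨j, hj⟩ := hcover m; ⟨j, Finset.mem_filter.2 ⟨Finset.mem_univ j, hj⟩⟩
    refine ⟨_, (mem_intervalBlock_iff hmono.monotone (j := Finset.min' _ hne)).2
      ⟨fun i hi => ?_, ?_⟩⟩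
    · by_contra! hmi
      exact (Finset.min'_le _ i (by simpa using hmi)).not_gt hi
    · simpa using Finset.min'_mem _ hne
  choose g hg using hex
  refine ⟨g, fun m m' hmm' => ?_, fun j => Finset.ext fun m => ?_⟩
  · by_contra! h
    exact (hlt h (hg m') (hg m)).not_ge hmm'
  · simp only [Finset.mem_filter, Finset.mem_univ, true_and]
    refine ⟨fun hm => ?_, fun h => h ▸ hg m⟩
    by_contra hne
    rcases lt_or_gt_of_ne hne with h | h
    · exact (hlt h (hg m) hm).false
    · exact (hlt h hm (hg m)).false

theorem intervalBlock_nonempty (hmono : StrictMono sfun) {j : Fin n} (hpos : 0 < sfun j)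
    (hle : sfun j ≤ s) : (intervalBlock (s := s) sfun j).Nonempty :=
  ⟨⟨sfun j - 1, by omega⟩, (mem_intervalBlock_iff hmono.monotone).2
    ⟨fun i hi => Nat.le_sub_one_of_lt (hmono hi), by simp; omega⟩⟩

end Intervals

section Join

open Finset

variable {n s : ℕ} {g : Fin s → Fin n} {π ρ : Finset (Finset (Fin s))}

theorem filter_subset_of_linked (hρ : IsPartitionOf univ ρ) (hπρ : leP π ρ)
    (hθρ : ∀ j, ∃ W ∈ ρ, univ.filter (g · = j) ⊆ W) {R : Finset (Fin s)} (hR : R ∈ ρ)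
    {j j' : Fin n} (hj : univ.filter (g · = j) ⊆ R) (h : Linked (π.image (image g)) j j') :
    univ.filter (g · = j') ⊆ R := by
  have hfib : ∀ z : Fin s, z ∈ univ.filter (g · = g z) := fun z => mem_filter.2 ⟨mem_univ z, rfl⟩
  induction h with
  | refl => exact hj
  | tail _ hwv ih =>
    obtain ⟨X, hX, hwX, hvX⟩ := hwv
    obtain ⟨V, hV, rfl⟩ := mem_image.1 hX
    obtain ⟨p, hp, rfl⟩ := mem_image.1 hwX
    obtain ⟨q, hq, rfl⟩ := mem_image.1 hvX
    obtain ⟨W, hW, hVW⟩ := hπρ V hV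
    obtain rfl : W = R := hρ.eq_of_mem hW hR (hVW hp) (ih (hfib p))
    obtain ⟨W', hW', hfibW'⟩ := hθρ (g q)
    obtain rfl : W' = W := hρ.eq_of_mem hW' hW (hfibW' (hfib q)) (hVW hq)
    exact hfibW'

theorem eq_singleton_univ_of_linked (hρ : IsPartitionOf univ ρ) (hπρ : leP π ρ)
    (hθρ : ∀ j, ∃ W ∈ ρ, univ.filter (g · = j) ⊆ W) (z₀ : Fin s)
    (hlink : ∀ j j', Linked (π.image (image g)) j j') : ρ = {univ} := by
  obtain ⟨R, hR, hz₀R⟩ := hρ.exists_mem z₀ (mem_univ z₀)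
  have hz₀ : univ.filter (g · = g z₀) ⊆ R := by
    obtain ⟨W, hW, hsub⟩ := hθρ (g z₀)
    rwa [← hρ.eq_of_mem hW hR (hsub (mem_filter.2 ⟨mem_univ z₀, rfl⟩)) hz₀R]
  have hRuniv : R = univ := eq_univ_of_forall fun z =>
    filter_subset_of_linked hρ hπρ hθρ hR hz₀ (hlink _ (g z)) (mem_filter.2 ⟨mem_univ z, rfl⟩)
  exact hρ.eq_singleton (hRuniv ▸ hR)

theorem forall_leP_eq_univ_iff (hn : 0 < n) (hg : Monotone g) (hsurj : Function.Surjective g)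
    (hπ : IsNCPartitionOf univ π) :
    (∀ ρ ∈ ncPartitions univ, leP π ρ → leP (univ.image fun j => univ.filter (g · = j)) ρ →
      ρ = {univ}) ↔ linkPartition univ (π.image (image g)) = {univ} := by
  have hP := hπ.linkPartition_image hg univ
  have hθ : ∀ {ρ}, leP (univ.image fun j => univ.filter (g · = j)) ρ ↔
      ∀ j, ∃ W ∈ ρ, univ.filter (g · = j) ⊆ W := by
    simp [leP]
  constructor
  · intro h
    set ρ := (linkPartition univ (π.image (image g))).image fun B => univ.filter (g · ∈ B)
    have hGP : ∀ X ∈ π.image (image g), ∃ B ∈ linkPartition univ (π.image (image g)), X ⊆ B :=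
      ((linkPartition_eq_iff_forall_subset hP.toIsPartitionOf (forall_mem_image.2
        fun V hV => ⟨(hπ.nonempty V hV).image g, subset_univ _⟩)).1 rfl).1
    have hπρ : leP π ρ := fun V hV => by
      obtain ⟨B, hB, hVB⟩ := hGP _ (mem_image_of_mem _ hV)
      exact ⟨_, mem_image_of_mem _ hB,
        fun z hz => mem_filter.2 ⟨mem_univ z, hVB (mem_image_of_mem g hz)⟩⟩
    have hθρ : ∀ j, ∃ W ∈ ρ, univ.filter (g · = j) ⊆ W := fun j => by
      obtain ⟨B, hB, hjB⟩ := hP.exists_mem j (mem_univ j)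
      exact ⟨_, mem_image_of_mem _ hB,
        fun z hz => mem_filter.2 ⟨mem_univ z, (mem_filter.1 hz).2 ▸ hjB⟩⟩
    have hρ : ρ = {univ} :=
      h ρ (mem_ncPartitions.2 (hP.comap hg (image_univ_of_surjective hsurj))) hπρ (hθ.2 hθρ)
    refine (linkPartition_eq_singleton_iff ⟨⟨0, hn⟩, mem_univ _⟩).2 fun i _ j _ => ?_
    obtain ⟨B, hB, hiB⟩ := hP.exists_mem i (mem_univ i)
    have hBuniv : univ.filter (g · ∈ B) = univ := mem_singleton.1 (hρ ▸ mem_image_of_mem _ hB)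
    obtain ⟨m, rfl⟩ := hsurj j
    have hm : m ∈ univ.filter (g · ∈ B) := by
      rw [hBuniv]
      exact mem_univ m
    exact linked_of_mem_linkPartition hB hiB (mem_filter.1 hm).2
  · intro h ρ hρ hπρ hθρ
    obtain ⟨z₀⟩ : Nonempty (Fin s) := (hsurj ⟨0, hn⟩).nonempty
    exact eq_singleton_univ_of_linked (mem_ncPartitions.1 hρ).toIsPartitionOf hπρ (hθ.1 hθρ)
      z₀ fun j j' => (linkPartition_eq_singleton_iff ⟨⟨0, hn⟩, mem_univ _⟩).1 h j (mem_univ _) j'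
        (mem_univ _)

end Join

open Classical in
/-- Formula for G-valued cumulants with products as entries:
`κ̃_n(a_1, …, a_n) = Σ_{π ∈ NC(s), π ∨ θ = 1_s} κ̃_π(x_1, …, x_s)`. -/
theorem grassmann_cumulant_of_products
    {A : Type*} [Ring A] [Algebra ℂ A]
    (φ : A →ₗ[ℂ] DualNumber ℂ)
    (κ : ∀ n : ℕ, (Fin n → A) → DualNumber ℂ)
    (hκ : MomentCumulant (⇑φ) κ)
    (s n : ℕ) (hn : 1 ≤ n) (sfun : Fin n → ℕ)
    (hmono : StrictMono sfun) (h1 : 1 ≤ sfun ⟨0, hn⟩)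
    (hlast : sfun ⟨n - 1, by omega⟩ = s)
    (x : Fin s → A) (a : Fin n → A)
    (ha : ∀ j : Fin n,
      a j = (List.ofFn (restrict x (intervalBlock (s := s) sfun j))).prod) :
    κ n a = ∑ π ∈ (NC s).filter (fun π =>
        ∀ ρ ∈ NC s, leP π ρ → leP (intervalPartition sfun s) ρ →
          ρ = {Finset.univ}),
      ∏ V ∈ π, κ V.card (restrict x V) := by
  have hle : ∀ j, sfun j ≤ s := fun j =>
    (hmono.monotone (Fin.le_def.2 (by simp; omega))).trans hlast.le
  obtain ⟨g, hg, hfib⟩ := exists_monotone_intervalBlock_eq hmono fun m =>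
    ⟨_, (Fin.is_lt m).trans_eq hlast.symm⟩
  have hsurj : Function.Surjective g := fun j => by
    obtain ⟨m, hm⟩ := intervalBlock_nonempty hmono
      (h1.trans (hmono.monotone (Fin.le_def.2 (Nat.zero_le _)))) (hle j)
    rw [hfib] at hm
    exact ⟨m, (Finset.mem_filter.1 hm).2⟩
  have hκn : κ Finset.univ.card (restrict a Finset.univ) = κ n a :=
    apply_eq_of_ofFn_eq κ (by rw [ofFn_restrict, Fin.sort_univ, List.ofFn_eq_map])
  rw [← hκn, cumulant_restrict_eq_sum_ncFiber hκ x a hg Finset.univ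
    (Finset.image_univ_of_surjective hsurj) ⟨⟨0, hn⟩, Finset.mem_univ _⟩
    fun j _ => by rw [ha, hfib],
    ncFiber, NC_eq_ncPartitions_univ]
  refine Finset.sum_congr (Finset.filter_congr fun π hπ => ?_) fun _ _ => rfl
  rw [intervalPartition, show intervalBlock sfun = _ from funext hfib]
  exact (forall_leP_eq_univ_iff hn hg hsurj (mem_ncPartitions.1 hπ)).symm

end InfFree
end

section
/- Let (A, φ, φ') be an infinitesimal noncommutative probability space with free cumulant functionals (κ_n)_{n≥1} and infinitesimal free cumulant functionals (κ'_n)_{n≥1}. Let T ⊆ ℝ be a set having 0 as an accumulation point (0 lies in the closure of T ∖ {0}) and let (φ_t)_{t ∈ T} be linear functionals A → ℂ with φ_t(1) = 1 such that, for every a ∈ A, φ_t(a) → φ(a) and (φ_t(a) − φ(a))/t → φ'(a) as t → 0 with t ∈ T ∖ {0}. For t ∈ T let (κ^{(t)}_n)_{n≥1} denote the free cumulant functionals of (A, φ_t). Then for every n ≥ 1 and a_1, ..., a_n ∈ A one has κ^{(t)}_n(a_1, ..., a_n) → κ_n(a_1, ..., a_n) and (κ^{(t)}_n(a_1, ...,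 a_n) − κ_n(a_1, ..., a_n))/t → κ'_n(a_1, ..., a_n) as t → 0 with t ∈ T ∖ {0}. -/
namespace InfFree

open scoped BigOperators

section Helpers

open Filter Finset

lemma kappa_cast {A : Type*} (κ : ∀ n : ℕ, (Fin n → A) → ℂ) {m n : ℕ} (h : m = n)
    (a : Fin n → A) : κ m (fun i => a (Fin.cast h i)) = κ n a := by
  subst h; rfl

lemma restrict_univ_eq {α : Type*} {n : ℕ} (a : Fin n → α) :
    restrict a (Finset.univ : Finset (Fin n))
      = fun i => a (Fin.cast (Finset.card_fin n) i) := by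
  have hf : StrictMono (fun i => ((Finset.univ : Finset (Fin n)).orderIsoOfFin rfl i).1) :=
    ((Finset.univ : Finset (Fin n)).orderEmbOfFin rfl).strictMono
  have hg : StrictMono (fun i : Fin (Finset.univ : Finset (Fin n)).card =>
      Fin.cast (Finset.card_fin n) i) := fun _ _ hij => hij
  have hr : Set.range (fun i => ((Finset.univ : Finset (Fin n)).orderIsoOfFin rfl i).1)
      = Set.range (fun i : Fin (Finset.univ : Finset (Fin n)).card =>
          Fin.cast (Finset.card_fin n) i) := by
    have h1 : Set.range (fun i => ((Finset.univ : Finset (Fin n)).orderIsoOfFin rfl i).1)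
        = (Finset.univ : Finset (Fin n)) :=
      Finset.range_orderEmbOfFin _ rfl
    rw [h1]
    refine ((Set.range_eq_univ.mpr ?_).trans (by simp)).symm
    intro j
    exact ⟨Fin.cast (Finset.card_fin n).symm j, rfl⟩
  funext i
  simp only [restrict]
  haveI : WellFoundedLT (Fin (#(Finset.univ : Finset (Fin n)))) := inferInstance
  have heq := (StrictMono.range_inj (γ := Fin n) hf hg).mp hr
  exact congrArg a (congrFun heq i)

lemma full_mem_NC {n : ℕ} (hn : 1 ≤ n) :
    ({(Finset.univ : Finset (Fin n))} : Finset (Finset (Fin n))) ∈ NC n := by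
  classical
  have : Nonempty (Fin n) := ⟨⟨0, hn⟩⟩
  simp only [NC, Finset.mem_filter, Finset.mem_univ, true_and]
  refine ⟨⟨?_, ?_⟩, ?_⟩
  · intro V hV
    rw [Finset.mem_singleton] at hV
    subst hV
    exact Finset.univ_nonempty
  · intro i
    exact ⟨Finset.univ, ⟨Finset.mem_singleton_self _, Finset.mem_univ i⟩,
      by rintro V ⟨hV, -⟩; exact Finset.mem_singleton.mp hV⟩
  · intro p q r s _ _ _ V hV W hW _ _ _ _
    rw [Finset.mem_singleton.mp hV, Finset.mem_singleton.mp hW]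

lemma mem_NC_iff {n : ℕ} {π : Finset (Finset (Fin n))} :
    π ∈ NC n ↔ IsPartition π ∧ IsNonCrossing π := by
  classical
  simp [NC]

lemma block_card {n : ℕ} {π : Finset (Finset (Fin n))} (hπ : π ∈ NC n)
    (hne : π ≠ {Finset.univ}) {V : Finset (Fin n)} (hV : V ∈ π) :
    1 ≤ V.card ∧ V.card < n := by
  classical
  have hP : IsPartition π := (mem_NC_iff.mp hπ).1
  have h1 : 1 ≤ V.card := Finset.card_pos.mpr (hP.1 V hV)
  refine ⟨h1, ?_⟩
  have hle : V.card ≤ n := by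
    simpa using Finset.card_le_univ V
  rcases lt_or_eq_of_le hle with h | h
  · exact h
  · exfalso
    apply hne
    have hVuniv : V = Finset.univ := Finset.eq_univ_of_card V (by simpa using h)
    subst hVuniv
    apply Finset.eq_singleton_iff_unique_mem.mpr
    refine ⟨hV, ?_⟩
    intro W hW
    obtain ⟨i, hi⟩ := hP.1 W hW
    obtain ⟨U, -, hU⟩ := hP.2 i
    exact (hU W ⟨hW, hi⟩).trans (hU Finset.univ ⟨hV, Finset.mem_univ i⟩).symm

lemma prod_full {A : Type*} (κf : ∀ n : ℕ, (Fin n → A) → ℂ) {n : ℕ} (a : Fin n → A) :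
    ∏ V ∈ ({(Finset.univ : Finset (Fin n))} : Finset (Finset (Fin n))),
      κf V.card (restrict a V) = κf n a := by
  rw [Finset.prod_singleton, restrict_univ_eq]
  exact kappa_cast κf (Finset.card_fin n) a

lemma sum_full {A : Type*} (κf κf' : ∀ n : ℕ, (Fin n → A) → ℂ) {n : ℕ} (a : Fin n → A) :
    ∑ V ∈ ({(Finset.univ : Finset (Fin n))} : Finset (Finset (Fin n))),
      κf' V.card (restrict a V) *
        ∏ W ∈ ({(Finset.univ : Finset (Fin n))} : Finset (Finset (Fin n))).erase V,
          κf W.card (restrict a W) = κf' n a := by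
  rw [Finset.sum_singleton, Finset.erase_singleton, Finset.prod_empty, mul_one,
    restrict_univ_eq]
  exact kappa_cast κf' (Finset.card_fin n) a

lemma kappa_rec {A : Type*} [Ring A] (φ : A → ℂ) (κf : ∀ n : ℕ, (Fin n → A) → ℂ)
    (h : MomentCumulant φ κf) {n : ℕ} (hn : 1 ≤ n) (a : Fin n → A) :
    κf n a = φ (List.ofFn a).prod -
      ∑ π ∈ (NC n).erase ({Finset.univ} : Finset (Finset (Fin n))),
        ∏ V ∈ π, κf V.card (restrict a V) := by
  classical
  have hm := h n hn a
  rw [← Finset.add_sum_erase (NC n) _ (full_mem_NC hn), prod_full κf a] at hm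
  rw [hm]; ring

lemma kappa'_rec {A : Type*} [Ring A] (φ' : A → ℂ) (κf κf' : ∀ n : ℕ, (Fin n → A) → ℂ)
    (h : InfMomentCumulant φ' κf κf') {n : ℕ} (hn : 1 ≤ n) (a : Fin n → A) :
    κf' n a = φ' (List.ofFn a).prod -
      ∑ π ∈ (NC n).erase ({Finset.univ} : Finset (Finset (Fin n))),
        ∑ V ∈ π, κf' V.card (restrict a V) *
          ∏ W ∈ π.erase V, κf W.card (restrict a W) := by
  classical
  have hm := h n hn a
  rw [← Finset.add_sum_erase (NC n) _ (full_mem_NC hn), sum_full κf κf' a] at hm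
  rw [hm]; ring

lemma diffquot_prod {ι : Type*} [DecidableEq ι] (L : Filter ℝ) (f : ι → ℝ → ℂ)
    (g g' : ι → ℂ) (s : Finset ι)
    (h1 : ∀ i ∈ s, Tendsto (f i) L (nhds (g i)))
    (h2 : ∀ i ∈ s, Tendsto (fun t : ℝ => (f i t - g i) / (t : ℂ)) L (nhds (g' i))) :
    Tendsto (fun t : ℝ => ((∏ i ∈ s, f i t) - ∏ i ∈ s, g i) / (t : ℂ)) L
      (nhds (∑ i ∈ s, g' i * ∏ j ∈ s.erase i, g j)) := by
  induction s using Finset.induction with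
  | empty =>
    simpa using (tendsto_const_nhds : Tendsto (fun _ : ℝ => (0 : ℂ)) L (nhds 0))
  | @insert i s hi ih =>
    have hmem : ∀ j ∈ s, j ∈ insert i s := fun j hj => Finset.mem_insert_of_mem hj
    have hii : i ∈ insert i s := Finset.mem_insert_self i s
    have hval : (∑ j ∈ insert i s, g' j * ∏ k ∈ (insert i s).erase j, g k)
        = g' i * ∏ j ∈ s, g j + g i * ∑ j ∈ s, g' j * ∏ k ∈ s.erase j, g k := by
      rw [Finset.sum_insert hi, Finset.erase_insert hi, Finset.mul_sum]
      congr 1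
      refine Finset.sum_congr rfl fun j hj => ?_
      rw [Finset.erase_insert_of_ne (fun h => hi (by rw [h]; exact hj)),
        Finset.prod_insert (fun h => hi (Finset.mem_of_mem_erase h))]
      ring
    rw [hval]
    have hT : Tendsto (fun t : ℝ =>
        ((f i t - g i) / (t : ℂ)) * (∏ j ∈ s, f j t)
          + g i * (((∏ j ∈ s, f j t) - ∏ j ∈ s, g j) / (t : ℂ))) L
        (nhds (g' i * ∏ j ∈ s, g j + g i * ∑ j ∈ s, g' j * ∏ k ∈ s.erase j, g k)) := by
      refine Tendsto.add (Tendsto.mul (h2 i hii) ?_)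
        (Tendsto.const_mul _ (ih (fun j hj => h1 j (hmem j hj))
          (fun j hj => h2 j (hmem j hj))))
      exact tendsto_finset_prod s (fun j hj => h1 j (hmem j hj))
    refine hT.congr fun t => ?_
    rw [Finset.prod_insert hi, Finset.prod_insert hi]
    rcases eq_or_ne (t : ℂ) 0 with h | h
    · simp [h]
    · field_simp
      ring

end Helpers

set_option maxHeartbeats 1000000 in
/-- If `(φ, φ')` is the infinitesimal limit at `0` of a family
`(φ_t)_{t ∈ T}`, then the cumulants of `φ_t` converge to those of `φ`, and their
difference quotients converge to the infinitesimal cumulants. -/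
theorem cumulants_of_infinitesimal_limit
    {A : Type*} [Ring A] [Algebra ℂ A]
    (φ φ' : A →ₗ[ℂ] ℂ) (hφ1 : φ 1 = 1) (hφ'1 : φ' 1 = 0)
    (κ κ' : ∀ n : ℕ, (Fin n → A) → ℂ)
    (hκ : MomentCumulant (⇑φ) κ) (hκ' : InfMomentCumulant (⇑φ') κ κ')
    (T : Set ℝ) (hT : (0 : ℝ) ∈ closure (T \ {0}))
    (φt : ℝ → (A →ₗ[ℂ] ℂ)) (hφt1 : ∀ t ∈ T, φt t 1 = 1)
    (hlim : ∀ a : A, Filter.Tendsto (fun t : ℝ => φt t a)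
      (nhdsWithin 0 (T \ {0})) (nhds (φ a)))
    (hlim' : ∀ a : A, Filter.Tendsto (fun t : ℝ => (φt t a - φ a) / (t : ℂ))
      (nhdsWithin 0 (T \ {0})) (nhds (φ' a)))
    (κt : ℝ → ∀ n : ℕ, (Fin n → A) → ℂ)
    (hκt : ∀ t ∈ T, MomentCumulant (⇑(φt t)) (κt t)) :
    ∀ (n : ℕ), 1 ≤ n → ∀ a : Fin n → A,
      Filter.Tendsto (fun t : ℝ => κt t n a)
        (nhdsWithin 0 (T \ {0})) (nhds (κ n a)) ∧
      Filter.Tendsto (fun t : ℝ => (κt t n a - κ n a) / (t : ℂ))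
        (nhdsWithin 0 (T \ {0})) (nhds (κ' n a)) := by
  open Filter Finset in
  intro n
  induction n using Nat.strong_induction_on with
  | _ n IH =>
  intro hn a
  set L := nhdsWithin (0 : ℝ) (T \ {0}) with hLdef
  have hmemT : ∀ᶠ t in L, t ∈ T \ {0} := self_mem_nhdsWithin
  set S := (NC n).erase ({Finset.univ} : Finset (Finset (Fin n))) with hSdef
  have hS : ∀ π ∈ S, π ∈ NC n ∧ π ≠ {Finset.univ} := fun π hπ =>
    ⟨Finset.mem_of_mem_erase hπ, Finset.ne_of_mem_erase hπ⟩
  have hIH1 : ∀ π ∈ S, ∀ V ∈ π, Tendsto (fun t : ℝ => κt t V.card (restrict a V)) L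
      (nhds (κ V.card (restrict a V))) := by
    intro π hπ V hV
    obtain ⟨h1, h2⟩ := block_card (hS π hπ).1 (hS π hπ).2 hV
    exact (IH V.card h2 h1 (restrict a V)).1
  have hIH2 : ∀ π ∈ S, ∀ V ∈ π,
      Tendsto (fun t : ℝ => (κt t V.card (restrict a V) - κ V.card (restrict a V)) / (t : ℂ))
        L (nhds (κ' V.card (restrict a V))) := by
    intro π hπ V hV
    obtain ⟨h1, h2⟩ := block_card (hS π hπ).1 (hS π hπ).2 hV
    exact (IH V.card h2 h1 (restrict a V)).2
  have hrecκ : κ n a = φ (List.ofFn a).prod -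
      ∑ π ∈ S, ∏ V ∈ π, κ V.card (restrict a V) := kappa_rec _ κ hκ hn a
  have hrecκ' : κ' n a = φ' (List.ofFn a).prod -
      ∑ π ∈ S, ∑ V ∈ π, κ' V.card (restrict a V) *
        ∏ W ∈ π.erase V, κ W.card (restrict a W) := kappa'_rec _ κ κ' hκ' hn a
  have hrecκt : ∀ᶠ t in L, κt t n a = φt t (List.ofFn a).prod -
      ∑ π ∈ S, ∏ V ∈ π, κt t V.card (restrict a V) :=
    hmemT.mono fun t ht => kappa_rec _ (κt t) (hκt t ht.1) hn a
  constructor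
  · have h1 : Tendsto (fun t : ℝ => φt t (List.ofFn a).prod -
        ∑ π ∈ S, ∏ V ∈ π, κt t V.card (restrict a V)) L
        (nhds (φ (List.ofFn a).prod - ∑ π ∈ S, ∏ V ∈ π, κ V.card (restrict a V))) :=
      (hlim _).sub (tendsto_finset_sum S fun π hπ => tendsto_finset_prod π (hIH1 π hπ))
    rw [hrecκ]
    exact Filter.Tendsto.congr' (hrecκt.mono fun t ht => ht.symm) h1
  · have hq : ∀ π ∈ S, Tendsto (fun t : ℝ =>
        ((∏ V ∈ π, κt t V.card (restrict a V)) - ∏ V ∈ π, κ V.card (restrict a V)) / (t : ℂ))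
        L (nhds (∑ V ∈ π, κ' V.card (restrict a V) *
          ∏ W ∈ π.erase V, κ W.card (restrict a W))) :=
      fun π hπ => diffquot_prod (ι := Finset (Fin n)) L
        (f := fun V t => κt t V.card (restrict a V))
        (g := fun V => κ V.card (restrict a V))
        (g' := fun V => κ' V.card (restrict a V)) (s := π)
        (h1 := hIH1 π hπ) (h2 := hIH2 π hπ)
    have h2 : Tendsto (fun t : ℝ =>
        (φt t (List.ofFn a).prod - φ (List.ofFn a).prod) / (t : ℂ) -
          ∑ π ∈ S, ((∏ V ∈ π, κt t V.card (restrict a V)) -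
            ∏ V ∈ π, κ V.card (restrict a V)) / (t : ℂ)) L
        (nhds (φ' (List.ofFn a).prod - ∑ π ∈ S, ∑ V ∈ π, κ' V.card (restrict a V) *
          ∏ W ∈ π.erase V, κ W.card (restrict a W))) :=
      (hlim' _).sub (tendsto_finset_sum S hq)
    rw [hrecκ']
    refine Filter.Tendsto.congr' (hrecκt.mono fun t ht => ?_) h2
    show _ = (κt t n a - κ n a) / (t : ℂ)
    rw [ht, hrecκ, ← Finset.sum_div, ← sub_div]
    congr 1
    rw [Finset.sum_sub_distrib]
    ring


end InfFree
end

section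
/- Let n be a positive integer and let π be a non-crossing partition of {1, ..., n} such that: (i) for every 1 ≤ i ≤ n−1, the numbers i and i+1 do not belong to the same block of π; and (ii) π has at most one block of cardinality 1. Then n is odd, and π is the partition {{1, n}, {2, n−1}, ..., {(n−1)/2, (n+3)/2}, {(n+1)/2}} (i.e., the blocks of π are exactly the pairs {m, n+1−m} for 1 ≤ m ≤ (n−1)/2 together with the singleton {(n+1)/2}). -/
/-!
Between two elements of a block there is a singleton block: the block of the successor of the
smaller element is nested inside and contains no two consecutive numbers. With only one singleton
`{s}`, the element `s` therefore separates any two elements of a block. Choosing for every `x` a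
different element of its block (`s` itself for `x = s`) gives a map which non-crossingness makes
strictly antitone, so it is `Fin.rev`. Hence every block is `{x, rev x}`, and `rev s = s` forces
`n` to be odd.
-/

namespace InfFree

open scoped BigOperators

section NoncrossingPartition

variable {n : ℕ} {π : Finset (Finset (Fin n))}

theorem IsPartition.eq_of_mem_of_mem (hπ : IsPartition π) {V W : Finset (Fin n)} {x : Fin n}
    (hV : V ∈ π) (hW : W ∈ π) (hxV : x ∈ V) (hxW : x ∈ W) : V = W :=
  (hπ.2 x).unique ⟨hV, hxV⟩ ⟨hW, hxW⟩

theorem exists_singleton_mem_between (hpart : IsPartition π) (hnc : IsNonCrossing π)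
    (hconsec : ∀ V ∈ π, ∀ p q : Fin n, p ∈ V → q ∈ V → (q : ℕ) = (p : ℕ) + 1 → False)
    {V : Finset (Fin n)} (hV : V ∈ π) {p q : Fin n} (hp : p ∈ V) (hq : q ∈ V) (hpq : p < q) :
    ∃ m, {m} ∈ π ∧ p < m ∧ m < q := by
  induction hd : (q : ℕ) - p using Nat.strong_induction_on generalizing V p q with
  | _ d ih =>
  have hpq' : (p : ℕ) + 1 < q := by
    have : (p : ℕ) < q := hpq
    have : (q : ℕ) ≠ p + 1 := fun h => hconsec V hV p q hp hq h
    omega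
  set p' : Fin n := ⟨p + 1, by omega⟩
  have hpp' : p < p' := Fin.lt_def.2 (Nat.lt_succ_self _)
  have hp'q : p' < q := Fin.lt_def.2 hpq'
  obtain ⟨W, ⟨hW, hp'W⟩, -⟩ := hpart.2 p'
  have hWV : W ≠ V := by
    rintro rfl
    exact hconsec W hW p p' hp hp'W rfl
  have hW_between : ∀ w ∈ W, p < w ∧ w < q := by
    intro w hw
    constructor
    · rcases lt_trichotomy w p with h | rfl | h
      · exact absurd (hnc w p p' q h hpp' hp'q W hW V hV hw hp'W hp hq) hWV
      · exact absurd (hpart.eq_of_mem_of_mem hW hV hw hp) hWV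
      · exact h
    · rcases lt_trichotomy w q with h | rfl | h
      · exact h
      · exact absurd (hpart.eq_of_mem_of_mem hW hV hw hq) hWV
      · exact absurd (hnc p p' q w hpp' hp'q h V hV W hW hp hq hp'W hw).symm hWV
  rcases Finset.eq_singleton_or_nontrivial hp'W with hW1 | hWnt
  · exact ⟨p', hW1 ▸ hW, hpp', hp'q⟩
  · obtain ⟨w, hw, hwp'⟩ := hWnt.exists_ne p'
    obtain ⟨hpw, hwq⟩ := hW_between w hw
    have hp'w : p' < w := by
      have : (p : ℕ) < w := hpw
      have : (w : ℕ) ≠ p + 1 := fun h => hwp' (Fin.ext h)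
      exact Fin.lt_def.2 (by simp only [p']; omega)
    have hlt : (w : ℕ) - p' < d := by
      have : (w : ℕ) < q := hwq
      simp only [p']; omega
    obtain ⟨m, hm, hp'm, hmw⟩ := ih _ hlt hW hp'W hw hp'w rfl
    exact ⟨m, hm, hpp'.trans hp'm, hmw.trans hwq⟩

theorem exists_singleton_mem (hn : 1 ≤ n) (hpart : IsPartition π) (hnc : IsNonCrossing π)
    (hconsec : ∀ V ∈ π, ∀ p q : Fin n, p ∈ V → q ∈ V → (q : ℕ) = (p : ℕ) + 1 → False) :
    ∃ s, {s} ∈ π := by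
  obtain ⟨V, ⟨hV, h0V⟩, -⟩ := hpart.2 ⟨0, hn⟩
  rcases Finset.eq_singleton_or_nontrivial h0V with hV1 | hVnt
  · exact ⟨_, hV1 ▸ hV⟩
  · obtain ⟨b, hb, hb0⟩ := hVnt.exists_ne ⟨0, hn⟩
    obtain ⟨m, hm, -⟩ := exists_singleton_mem_between hpart hnc hconsec hV h0V hb
      (Fin.lt_def.2 (Nat.pos_of_ne_zero fun h => hb0 (Fin.ext h)))
    exact ⟨m, hm⟩

def SeparatedBy (π : Finset (Finset (Fin n))) (s : Fin n) : Prop :=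
  ∀ V ∈ π, ∀ a ∈ V, ∀ b ∈ V, a < b → a < s ∧ s < b

theorem separatedBy_of_singleton_mem (hpart : IsPartition π) (hnc : IsNonCrossing π)
    (hconsec : ∀ V ∈ π, ∀ p q : Fin n, p ∈ V → q ∈ V → (q : ℕ) = (p : ℕ) + 1 → False)
    (hsingle : ∀ V ∈ π, ∀ W ∈ π, V.card = 1 → W.card = 1 → V = W)
    {s : Fin n} (hs : {s} ∈ π) : SeparatedBy π s := by
  intro V hV a ha b hb hab
  obtain ⟨m, hm, ham, hmb⟩ := exists_singleton_mem_between hpart hnc hconsec hV ha hb hab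
  obtain rfl : m = s := Finset.singleton_inj.1 (hsingle _ hm _ hs rfl rfl)
  exact ⟨ham, hmb⟩

theorem SeparatedBy.lt_and_lt_or_lt_and_lt {s : Fin n} (hsep : SeparatedBy π s)
    {V : Finset (Fin n)} (hV : V ∈ π) {a b : Fin n} (ha : a ∈ V) (hb : b ∈ V) (hab : a ≠ b) :
    (a < s ∧ s < b) ∨ (b < s ∧ s < a) := by
  rcases hab.lt_or_gt with h | h
  · exact .inl (hsep V hV a ha b hb h)
  · exact .inr (hsep V hV b hb a ha h)

theorem SeparatedBy.strictAnti (hpart : IsPartition π) (hnc : IsNonCrossing π) {s : Fin n}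
    (hs : {s} ∈ π) (hsep : SeparatedBy π s) {f : Fin n → Fin n}
    (hf : ∀ x, ∃ V ∈ π, x ∈ V ∧ f x ∈ V) (hfx : ∀ x, f x = x → x = s) : StrictAnti f := by
  have hfs : f s = s := by
    obtain ⟨V, hV, hsV, hfsV⟩ := hf s
    rw [hpart.eq_of_mem_of_mem hV hs hsV (Finset.mem_singleton_self s)] at hfsV
    exact Finset.mem_singleton.1 hfsV
  have hside : ∀ x, (x < s → s < f x) ∧ (s < x → f x < s) := by
    intro x
    obtain ⟨V, hV, hxV, hfxV⟩ := hf x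
    by_cases hxs : x = s
    · subst hxs
      exact ⟨fun h => (lt_irrefl x h).elim, fun h => (lt_irrefl x h).elim⟩
    · rcases hsep.lt_and_lt_or_lt_and_lt hV hxV hfxV fun h => hxs (hfx x h.symm) with
        ⟨h₁, h₂⟩ | ⟨h₁, h₂⟩ <;> constructor <;> intro h <;> order
  intro x y hxy
  by_contra! hle
  obtain ⟨V, hV, hxV, hfxV⟩ := hf x
  obtain ⟨W, hW, hyW, hfyW⟩ := hf y
  by_cases hsame : y < s ∨ s < x
  · -- on one side of `s`, the pairs `x, f x` and `y, f y` would cross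
    have hVW : V = W := by
      rcases hle.lt_or_eq with h | h
      · rcases hsame with hys | hsx
        · exact hnc x y (f x) (f y) hxy (hys.trans ((hside x).1 (hxy.trans hys))) h
            V hV W hW hxV hfxV hyW hfyW
        · exact hnc (f x) (f y) x y h (((hside y).2 (hsx.trans hxy)).trans hsx) hxy
            V hV W hW hfxV hxV hfyW hyW
      · exact hpart.eq_of_mem_of_mem hV hW hfxV (h ▸ hfyW)
    obtain ⟨hxs, hsy⟩ := hsep V hV x hxV y (hVW ▸ hyW) hxy
    rcases hsame with h | h <;> order
  · rw [not_or, not_lt, not_lt] at hsame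
    obtain ⟨hsy, hxs⟩ := hsame
    rcases hxs.lt_or_eq with hxs | hxs
    · have := (hside x).1 hxs
      rcases hsy.lt_or_eq with hsy | hsy
      · have := (hside y).2 hsy
        order
      · rw [← hsy, hfs] at hle
        order
    · have := (hside y).2 (hxs ▸ hxy)
      rw [hxs, hfs] at hle
      order

theorem SeparatedBy.eq_pair_rev (hpart : IsPartition π) (hnc : IsNonCrossing π)
    (hsingle : ∀ V ∈ π, ∀ W ∈ π, V.card = 1 → W.card = 1 → V = W)
    {s : Fin n} (hs : {s} ∈ π) (hsep : SeparatedBy π s)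
    {V : Finset (Fin n)} (hV : V ∈ π) {x : Fin n} (hx : x ∈ V) : V = {x, x.rev} := by
  have hpartner : ∀ x, ∃ y, (∃ V ∈ π, x ∈ V ∧ y ∈ V) ∧ (y = x → x = s) := by
    intro x
    obtain ⟨V, ⟨hV, hxV⟩, -⟩ := hpart.2 x
    rcases Finset.eq_singleton_or_nontrivial hxV with rfl | hVnt
    · exact ⟨x, ⟨_, hV, hxV, hxV⟩, fun _ => Finset.singleton_inj.1 (hsingle _ hV _ hs rfl rfl)⟩
    · obtain ⟨y, hy, hyx⟩ := hVnt.exists_ne x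
      exact ⟨y, ⟨V, hV, hxV, hy⟩, fun h => absurd h hyx⟩
  choose f hf hfx using hpartner
  have hf_rev : ∀ x, f x = x.rev := fun x =>
    Fin.rev_eq_iff.1 (Fin.rev_strictAnti.comp (hsep.strictAnti hpart hnc hs hf hfx)).apply_eq
  have hfxV : f x ∈ V := by
    obtain ⟨W, hW, hxW, hfxW⟩ := hf x
    exact hpart.eq_of_mem_of_mem hW hV hxW hx ▸ hfxW
  ext y
  simp only [Finset.mem_insert, Finset.mem_singleton, ← hf_rev]
  refine ⟨fun hy => ?_, by rintro (rfl | rfl) <;> assumption⟩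
  by_contra! hne
  by_cases hxs : x = s
  · subst hxs
    have hVx : V = {x} := hpart.eq_of_mem_of_mem hV hs hx (Finset.mem_singleton_self x)
    exact hne.1 (Finset.mem_singleton.1 (hVx ▸ hy))
  · have hfxx : f x ≠ x := fun h => hxs (hfx x h)
    rcases hsep.lt_and_lt_or_lt_and_lt hV hx hy (Ne.symm hne.1) with h₁ | h₁ <;>
      rcases hsep.lt_and_lt_or_lt_and_lt hV hx hfxV hfxx.symm with h₂ | h₂ <;>
      rcases hsep.lt_and_lt_or_lt_and_lt hV hy hfxV hne.2 with h₃ | h₃ <;>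
      order

end NoncrossingPartition

/-- A non-crossing partition of `{1, …, n}` with no block containing
two consecutive numbers and with at most one singleton block must be the pairing
`{{1, n}, {2, n−1}, …, {(n−1)/2, (n+3)/2}, {(n+1)/2}}`, and `n` must be odd. -/
theorem noncrossing_no_consecutive_at_most_one_singleton
    {n : ℕ} (hn : 1 ≤ n) (π : Finset (Finset (Fin n))) (hπ : π ∈ NC n)
    (hconsec : ∀ V ∈ π, ∀ p q : Fin n, p ∈ V → q ∈ V → (q : ℕ) = (p : ℕ) + 1 → False)
    (hsingle : ∀ V ∈ π, ∀ W ∈ π, V.card = 1 → W.card = 1 → V = W) :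
    Odd n ∧
      π = Finset.image (fun m : Fin n => ({m, m.rev} : Finset (Fin n)))
        Finset.univ := by
  obtain ⟨hpart, hnc⟩ : IsPartition π ∧ IsNonCrossing π := by
    simpa only [NC, Finset.mem_filter, Finset.mem_univ, true_and] using hπ
  obtain ⟨s, hs⟩ := exists_singleton_mem hn hpart hnc hconsec
  have hblock : ∀ V ∈ π, ∀ x ∈ V, V = {x, x.rev} := fun V hV x hx =>
    (separatedBy_of_singleton_mem hpart hnc hconsec hsingle hs).eq_pair_rev hpart hnc hsingle hs
      hV hx
  constructor
  · have hrev : s.rev = s := by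
      have := hblock _ hs s (Finset.mem_singleton_self s)
      exact Finset.mem_singleton.1 (this ▸ Finset.mem_insert_of_mem (Finset.mem_singleton_self _))
    have := congrArg Fin.val hrev
    rw [Fin.val_rev] at this
    exact ⟨s, by omega⟩
  · ext V
    simp only [Finset.mem_image, Finset.mem_univ, true_and]
    constructor
    · intro hV
      obtain ⟨x, hx⟩ := hpart.1 V hV
      exact ⟨x, (hblock V hV x hx).symm⟩
    · rintro ⟨x, rfl⟩
      obtain ⟨V, ⟨hV, hx⟩, -⟩ := hpart.2 x
      exact hblock V hV x hx ▸ hV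

end InfFree
end
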